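/- arXiv:2010.01834 — 9 statements merged into one kernel-verified Lean document; each statement's English description precedes it below -/
import Mathlib

section
/- Let T > 0, L > 0 and m ∈ ℕ. Let a, v : [0,T] × [0,L] → ℝ, b₀, b_L : [0,T] → ℝ and g₀, g_L : [0,T] → ℝ^m be continuous, and let h ∈ ℝ^m. Let w, φ : [0,T] × [0,L] → ℝ be continuous functions such that: ∂_t w and ∂_t φ exist and are continuous on [0,T] × [0,L]; the function ψ(t,x) := a(t,x) w(t,x) has continuous partial derivatives ∂_x ψ and ∂_{xx} ψ on [0,T] × [0,L]; and φ has continuous partial derivatives ∂_x φ and ∂_{xx} φ on [0,T] × [0,L]. Suppose that for all (t,x) ∈ [0,T] × [0,L]: (1) ∂_t w(t,x) = ∂_{xx} ψ(t,x); (2) ∂_x ψ(t,0) = b₀(t) w(t,0) + g₀(t)·h and −∂_x ψ(t,L) = b_L(t) w(t,L) + g_L(t)·h; (3) w(0,x) = 0; (4) ∂_t φ(t,x) = −a(t,x) ∂_{xx} φ(t,x) − v(t,x); (5) a(t,0) ∂_x φ(t,0) = b₀(t) φ(t,0) and −a(t,L) ∂_x φ(t,L) = b_L(t) φ(t,L);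 (6) φ(T,x) = 0. Then ∫₀ᵀ ∫₀ᴸ w(t,x) v(t,x) dx dt = h · ∫₀ᵀ ( −g₀(t) φ(t,0) − g_L(t) φ(t,L) ) dt, where the last integral of the ℝ^m-valued integrand is taken componentwise. -/
/-!
Set `S := w_t φ + w φ_t + w v`. By the two evolution equations, `S = ψ_xx φ - ψ φ_xx` with
`ψ = a w`, so Green's second identity in `x` turns `∫₀ᴸ S dx` into the boundary terms
`[ψ_x φ - ψ φ_x]₀ᴸ`; the Robin conditions of the forward and adjoint problems cancel the
`b₀, b_L` contributions and leave `-(g₀·h) φ(t,0) - (g_L·h) φ(t,L)`. On the other hand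
`w_t φ + w φ_t = ∂_t (w φ)` integrates to zero in `t` since `w(0,·) = 0` and `φ(T,·) = 0`,
so `∫₀ᵀ S dt = ∫₀ᵀ w v dt`. Fubini on the rectangle identifies the two double integrals.
-/

open Set MeasureTheory intervalIntegral

theorem intervalIntegral_integral_swap_of_continuousOn {E : Type*} [NormedAddCommGroup E]
    [NormedSpace ℝ E] [CompleteSpace E] {a b c d : ℝ} (hab : a ≤ b) (hcd : c ≤ d)
    {f : ℝ → ℝ → E} (hf : ContinuousOn (Function.uncurry f) (Icc a b ×ˢ Icc c d)) :
    ∫ x in a..b, ∫ y in c..d, f x y = ∫ y in c..d, ∫ x in a..b, f x y := by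
  have hint : Integrable (Function.uncurry f)
      ((volume.restrict (Ioc a b)).prod (volume.restrict (Ioc c d))) := by
    rw [Measure.prod_restrict]
    exact (hf.integrableOn_compact (isCompact_Icc.prod isCompact_Icc)).mono_set
      (prod_mono Ioc_subset_Icc_self Ioc_subset_Icc_self)
  simpa only [integral_of_le hab, integral_of_le hcd] using integral_integral_swap hint

theorem integral_eq_sub_of_hasDerivWithinAt_Icc {a b : ℝ} (hab : a ≤ b) {f f' : ℝ → ℝ}
    (hf : ∀ x ∈ Icc a b, HasDerivWithinAt f (f' x) (Icc a b) x)
    (hf' : ContinuousOn f' (Icc a b)) :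
    ∫ x in a..b, f' x = f b - f a :=
  integral_eq_sub_of_hasDeriv_right_of_le hab (fun x hx => (hf x hx).continuousWithinAt)
    (fun x hx => ((hf x (Ioo_subset_Icc_self hx)).hasDerivAt
      (Icc_mem_nhds hx.1 hx.2)).hasDerivWithinAt)
    (hf'.intervalIntegrable_of_Icc hab)

theorem integral_deriv_mul_add_mul_deriv_add_eq_of_eq_zero {a b : ℝ} (hab : a ≤ b)
    {u u' v v' f : ℝ → ℝ}
    (hu : ∀ x ∈ Icc a b, HasDerivWithinAt u (u' x) (Icc a b) x)
    (hv : ∀ x ∈ Icc a b, HasDerivWithinAt v (v' x) (Icc a b) x)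
    (hu' : ContinuousOn u' (Icc a b)) (hv' : ContinuousOn v' (Icc a b))
    (hf : ContinuousOn f (Icc a b)) (hua : u a = 0) (hvb : v b = 0) :
    ∫ x in a..b, (u' x * v x + u x * v' x + f x) = ∫ x in a..b, f x := by
  have hu_cont : ContinuousOn u (Icc a b) := fun x hx => (hu x hx).continuousWithinAt
  have hv_cont : ContinuousOn v (Icc a b) := fun x hx => (hv x hx).continuousWithinAt
  have hderiv_cont : ContinuousOn (fun x => u' x * v x + u x * v' x) (Icc a b) :=
    (hu'.mul hv_cont).add (hu_cont.mul hv')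
  have hderiv_int : ∫ x in a..b, (u' x * v x + u x * v' x) = 0 := by
    rw [integral_eq_sub_of_hasDerivWithinAt_Icc hab (f := fun x => u x * v x)
      (fun x hx => (hu x hx).mul (hv x hx)) hderiv_cont, hua, hvb]
    ring
  rw [integral_add (hderiv_cont.intervalIntegrable_of_Icc hab) (hf.intervalIntegrable_of_Icc hab),
    hderiv_int, zero_add]

theorem integral_second_deriv_mul_sub_mul_second_deriv {a b : ℝ} (hab : a ≤ b)
    {u u' u'' v v' v'' : ℝ → ℝ}
    (hu : ∀ x ∈ Icc a b, HasDerivWithinAt u (u' x) (Icc a b) x)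
    (hu' : ∀ x ∈ Icc a b, HasDerivWithinAt u' (u'' x) (Icc a b) x)
    (hv : ∀ x ∈ Icc a b, HasDerivWithinAt v (v' x) (Icc a b) x)
    (hv' : ∀ x ∈ Icc a b, HasDerivWithinAt v' (v'' x) (Icc a b) x)
    (hu'' : ContinuousOn u'' (Icc a b)) (hv'' : ContinuousOn v'' (Icc a b)) :
    ∫ x in a..b, (u'' x * v x - u x * v'' x) =
      (u' b * v b - u b * v' b) - (u' a * v a - u a * v' a) := by
  have hcont {g g' : ℝ → ℝ} (hg : ∀ x ∈ Icc a b, HasDerivWithinAt g (g' x) (Icc a b) x) :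
      ContinuousOn g (Icc a b) := fun x hx => (hg x hx).continuousWithinAt
  refine integral_eq_sub_of_hasDerivWithinAt_Icc hab (f := fun x => u' x * v x - u x * v' x)
    (f' := fun x => u'' x * v x - u x * v'' x) (fun x hx => ?_)
    ((hu''.mul (hcont hv)).sub ((hcont hu).mul hv''))
  exact (((hu' x hx).mul (hv x hx)).sub ((hu x hx).mul (hv' x hx))).congr_deriv (by ring)

theorem integral_second_deriv_mul_sub_mul_second_deriv_of_robin {L : ℝ} (hL : 0 ≤ L)
    {α w ψ' ψ'' φ φ' φ'' : ℝ → ℝ} {β₀ βL γ₀ γL : ℝ}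
    (hψ : ∀ x ∈ Icc 0 L, HasDerivWithinAt (fun y => α y * w y) (ψ' x) (Icc 0 L) x)
    (hψ' : ∀ x ∈ Icc 0 L, HasDerivWithinAt ψ' (ψ'' x) (Icc 0 L) x)
    (hφ : ∀ x ∈ Icc 0 L, HasDerivWithinAt φ (φ' x) (Icc 0 L) x)
    (hφ' : ∀ x ∈ Icc 0 L, HasDerivWithinAt φ' (φ'' x) (Icc 0 L) x)
    (hψ'' : ContinuousOn ψ'' (Icc 0 L)) (hφ'' : ContinuousOn φ'' (Icc 0 L))
    (hψ0 : ψ' 0 = β₀ * w 0 + γ₀) (hψL : -ψ' L = βL * w L + γL)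
    (hφ0 : α 0 * φ' 0 = β₀ * φ 0) (hφL : -(α L * φ' L) = βL * φ L) :
    ∫ x in 0..L, (ψ'' x * φ x - α x * w x * φ'' x) = -(γ₀ * φ 0) - γL * φ L := by
  rw [integral_second_deriv_mul_sub_mul_second_deriv hL hψ hψ' hφ hφ' hψ'' hφ'']
  linear_combination -φ L * hψL - φ 0 * hψ0 + w 0 * hφ0 + w L * hφL

theorem stmt_1_general (T L : ℝ) (hT : 0 < T) (hL : 0 < L) (m : ℕ)
    (a v : ℝ → ℝ → ℝ) (b₀ bL : ℝ → ℝ) (g₀ gL : ℝ → Fin m → ℝ) (h : Fin m → ℝ)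
    (hv : ContinuousOn (fun q : ℝ × ℝ => v q.1 q.2) (Icc 0 T ×ˢ Icc 0 L))
    (hg₀ : ∀ i : Fin m, ContinuousOn (fun t => g₀ t i) (Icc 0 T))
    (hgL : ∀ i : Fin m, ContinuousOn (fun t => gL t i) (Icc 0 T))
    (w φ : ℝ → ℝ → ℝ)
    (hwc : ContinuousOn (fun q : ℝ × ℝ => w q.1 q.2) (Icc 0 T ×ˢ Icc 0 L))
    (hφc : ContinuousOn (fun q : ℝ × ℝ => φ q.1 q.2) (Icc 0 T ×ˢ Icc 0 L))
    (wt φt ψx ψxx φx φxx : ℝ → ℝ → ℝ)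
    -- existence of the derivatives on the closed rectangle
    (hwt : ∀ t ∈ Icc (0:ℝ) T, ∀ x ∈ Icc (0:ℝ) L,
      HasDerivWithinAt (fun s => w s x) (wt t x) (Icc 0 T) t)
    (hφt : ∀ t ∈ Icc (0:ℝ) T, ∀ x ∈ Icc (0:ℝ) L,
      HasDerivWithinAt (fun s => φ s x) (φt t x) (Icc 0 T) t)
    (hψx : ∀ t ∈ Icc (0:ℝ) T, ∀ x ∈ Icc (0:ℝ) L,
      HasDerivWithinAt (fun y => a t y * w t y) (ψx t x) (Icc 0 L) x)
    (hψxx : ∀ t ∈ Icc (0:ℝ) T, ∀ x ∈ Icc (0:ℝ) L,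
      HasDerivWithinAt (fun y => ψx t y) (ψxx t x) (Icc 0 L) x)
    (hφx : ∀ t ∈ Icc (0:ℝ) T, ∀ x ∈ Icc (0:ℝ) L,
      HasDerivWithinAt (fun y => φ t y) (φx t x) (Icc 0 L) x)
    (hφxx : ∀ t ∈ Icc (0:ℝ) T, ∀ x ∈ Icc (0:ℝ) L,
      HasDerivWithinAt (fun y => φx t y) (φxx t x) (Icc 0 L) x)
    -- continuity of the derivatives on the closed rectangle
    (hwtc : ContinuousOn (fun q : ℝ × ℝ => wt q.1 q.2) (Icc 0 T ×ˢ Icc 0 L))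
    (hφtc : ContinuousOn (fun q : ℝ × ℝ => φt q.1 q.2) (Icc 0 T ×ˢ Icc 0 L))
    (hψxxc : ContinuousOn (fun q : ℝ × ℝ => ψxx q.1 q.2) (Icc 0 T ×ˢ Icc 0 L))
    (hφxxc : ContinuousOn (fun q : ℝ × ℝ => φxx q.1 q.2) (Icc 0 T ×ˢ Icc 0 L))
    -- (1) the linearized evolution equation
    (heq1 : ∀ t ∈ Icc (0:ℝ) T, ∀ x ∈ Icc (0:ℝ) L, wt t x = ψxx t x)
    -- (2) the linearized boundary conditions
    (heq2a : ∀ t ∈ Icc (0:ℝ) T, ψx t 0 = b₀ t * w t 0 + ∑ i, g₀ t i * h i)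
    (heq2b : ∀ t ∈ Icc (0:ℝ) T, -ψx t L = bL t * w t L + ∑ i, gL t i * h i)
    -- (3) the homogeneous initial condition
    (heq3 : ∀ x ∈ Icc (0:ℝ) L, w 0 x = 0)
    -- (4) the backward adjoint equation
    (heq4 : ∀ t ∈ Icc (0:ℝ) T, ∀ x ∈ Icc (0:ℝ) L,
      φt t x = -(a t x * φxx t x) - v t x)
    -- (5) the adjoint boundary conditions
    (heq5a : ∀ t ∈ Icc (0:ℝ) T, a t 0 * φx t 0 = b₀ t * φ t 0)
    (heq5b : ∀ t ∈ Icc (0:ℝ) T, -(a t L * φx t L) = bL t * φ t L)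
    -- (6) the terminal condition
    (heq6 : ∀ x ∈ Icc (0:ℝ) L, φ T x = 0) :
    (∫ t in (0:ℝ)..T, ∫ x in (0:ℝ)..L, w t x * v t x) =
      ∑ i, h i * ∫ t in (0:ℝ)..T, (-(g₀ t i * φ t 0) - gL t i * φ t L) := by
  have hspace : ∀ t ∈ Icc (0:ℝ) T,
      ∫ x in (0:ℝ)..L, (wt t x * φ t x + w t x * φt t x + w t x * v t x) =
        ∑ i, h i * (-(g₀ t i * φ t 0) - gL t i * φ t L) := fun t ht => by
    have hS : EqOn (fun x => wt t x * φ t x + w t x * φt t x + w t x * v t x)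
        (fun x => ψxx t x * φ t x - a t x * w t x * φxx t x) (uIcc 0 L) := fun x hx => by
      rw [uIcc_of_le hL.le] at hx
      simp only [heq1 t ht x hx, heq4 t ht x hx]
      ring
    rw [integral_congr hS,
      integral_second_deriv_mul_sub_mul_second_deriv_of_robin hL.le (hψx t ht) (hψxx t ht)
        (hφx t ht) (hφxx t ht) (hψxxc.uncurry_left t ht) (hφxxc.uncurry_left t ht)
        (heq2a t ht) (heq2b t ht) (heq5a t ht) (heq5b t ht),
      Finset.sum_mul, Finset.sum_mul, ← Finset.sum_neg_distrib, ← Finset.sum_sub_distrib]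
    exact Finset.sum_congr rfl fun i _ => by ring
  have htime : ∀ x ∈ Icc (0:ℝ) L,
      ∫ t in (0:ℝ)..T, (wt t x * φ t x + w t x * φt t x + w t x * v t x) =
        ∫ t in (0:ℝ)..T, w t x * v t x := fun x hx =>
    integral_deriv_mul_add_mul_deriv_add_eq_of_eq_zero hT.le (fun t ht => hwt t ht x hx)
      (fun t ht => hφt t ht x hx) (hwtc.uncurry_right x hx) (hφtc.uncurry_right x hx)
      ((hwc.uncurry_right x hx).fun_mul (hv.uncurry_right x hx)) (heq3 x hx) (heq6 x hx)
  calc ∫ t in (0:ℝ)..T, ∫ x in (0:ℝ)..L, w t x * v t x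
      = ∫ x in (0:ℝ)..L, ∫ t in (0:ℝ)..T, w t x * v t x :=
        intervalIntegral_integral_swap_of_continuousOn hT.le hL.le (hwc.fun_mul hv)
    _ = ∫ x in (0:ℝ)..L, ∫ t in (0:ℝ)..T,
          (wt t x * φ t x + w t x * φt t x + w t x * v t x) :=
        integral_congr fun x hx => (htime x (uIcc_of_le hL.le ▸ hx)).symm
    _ = ∫ t in (0:ℝ)..T, ∫ x in (0:ℝ)..L,
          (wt t x * φ t x + w t x * φt t x + w t x * v t x) :=
        Eq.symm <| intervalIntegral_integral_swap_of_continuousOn hT.le hL.le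
          (((hwtc.fun_mul hφc).fun_add (hwc.fun_mul hφtc)).fun_add (hwc.fun_mul hv))
    _ = ∫ t in (0:ℝ)..T, ∑ i, h i * (-(g₀ t i * φ t 0) - gL t i * φ t L) :=
        integral_congr fun t ht => hspace t (uIcc_of_le hT.le ▸ ht)
    _ = ∑ i, h i * ∫ t in (0:ℝ)..T, (-(g₀ t i * φ t 0) - gL t i * φ t L) := by
        have hφ0 := hφc.uncurry_right 0 (left_mem_Icc.2 hL.le)
        have hφL := hφc.uncurry_right L (right_mem_Icc.2 hL.le)
        rw [integral_finsetSum fun i _ =>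
          ((((hg₀ i).fun_mul hφ0).fun_neg.fun_sub ((hgL i).fun_mul hφL)).intervalIntegrable_of_Icc
            hT.le).const_mul _]
        simp only [intervalIntegral.integral_const_mul]

/-- Adjoint-state identity: if `w` solves the linearized sensitivity problem with
diffusivity `a`, boundary coefficients `b₀, b_L` and inhomogeneities `g₀·h, g_L·h`,
and `φ` solves the backward adjoint problem with source `v` and terminal condition
`φ(T,·) = 0`, then `∫₀ᵀ∫₀ᴸ w v = h · ∫₀ᵀ (−g₀ φ(·,0) − g_L φ(·,L))`. -/
theorem stmt_1 (T L : ℝ) (hT : 0 < T) (hL : 0 < L) (m : ℕ)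
    (a v : ℝ → ℝ → ℝ) (b₀ bL : ℝ → ℝ) (g₀ gL : ℝ → Fin m → ℝ) (h : Fin m → ℝ)
    (ha : ContinuousOn (fun q : ℝ × ℝ => a q.1 q.2) (Icc 0 T ×ˢ Icc 0 L))
    (hv : ContinuousOn (fun q : ℝ × ℝ => v q.1 q.2) (Icc 0 T ×ˢ Icc 0 L))
    (hb₀ : ContinuousOn b₀ (Icc 0 T)) (hbL : ContinuousOn bL (Icc 0 T))
    (hg₀ : ∀ i : Fin m, ContinuousOn (fun t => g₀ t i) (Icc 0 T))
    (hgL : ∀ i : Fin m, ContinuousOn (fun t => gL t i) (Icc 0 T))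
    (w φ : ℝ → ℝ → ℝ)
    (hwc : ContinuousOn (fun q : ℝ × ℝ => w q.1 q.2) (Icc 0 T ×ˢ Icc 0 L))
    (hφc : ContinuousOn (fun q : ℝ × ℝ => φ q.1 q.2) (Icc 0 T ×ˢ Icc 0 L))
    (wt φt ψx ψxx φx φxx : ℝ → ℝ → ℝ)
    -- existence of the derivatives on the closed rectangle
    (hwt : ∀ t ∈ Icc (0:ℝ) T, ∀ x ∈ Icc (0:ℝ) L,
      HasDerivWithinAt (fun s => w s x) (wt t x) (Icc 0 T) t)
    (hφt : ∀ t ∈ Icc (0:ℝ) T, ∀ x ∈ Icc (0:ℝ) L,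
      HasDerivWithinAt (fun s => φ s x) (φt t x) (Icc 0 T) t)
    (hψx : ∀ t ∈ Icc (0:ℝ) T, ∀ x ∈ Icc (0:ℝ) L,
      HasDerivWithinAt (fun y => a t y * w t y) (ψx t x) (Icc 0 L) x)
    (hψxx : ∀ t ∈ Icc (0:ℝ) T, ∀ x ∈ Icc (0:ℝ) L,
      HasDerivWithinAt (fun y => ψx t y) (ψxx t x) (Icc 0 L) x)
    (hφx : ∀ t ∈ Icc (0:ℝ) T, ∀ x ∈ Icc (0:ℝ) L,
      HasDerivWithinAt (fun y => φ t y) (φx t x) (Icc 0 L) x)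
    (hφxx : ∀ t ∈ Icc (0:ℝ) T, ∀ x ∈ Icc (0:ℝ) L,
      HasDerivWithinAt (fun y => φx t y) (φxx t x) (Icc 0 L) x)
    -- continuity of the derivatives on the closed rectangle
    (hwtc : ContinuousOn (fun q : ℝ × ℝ => wt q.1 q.2) (Icc 0 T ×ˢ Icc 0 L))
    (hφtc : ContinuousOn (fun q : ℝ × ℝ => φt q.1 q.2) (Icc 0 T ×ˢ Icc 0 L))
    (hψxc : ContinuousOn (fun q : ℝ × ℝ => ψx q.1 q.2) (Icc 0 T ×ˢ Icc 0 L))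
    (hψxxc : ContinuousOn (fun q : ℝ × ℝ => ψxx q.1 q.2) (Icc 0 T ×ˢ Icc 0 L))
    (hφxc : ContinuousOn (fun q : ℝ × ℝ => φx q.1 q.2) (Icc 0 T ×ˢ Icc 0 L))
    (hφxxc : ContinuousOn (fun q : ℝ × ℝ => φxx q.1 q.2) (Icc 0 T ×ˢ Icc 0 L))
    -- (1) the linearized evolution equation
    (heq1 : ∀ t ∈ Icc (0:ℝ) T, ∀ x ∈ Icc (0:ℝ) L, wt t x = ψxx t x)
    -- (2) the linearized boundary conditions
    (heq2a : ∀ t ∈ Icc (0:ℝ) T, ψx t 0 = b₀ t * w t 0 + ∑ i, g₀ t i * h i)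
    (heq2b : ∀ t ∈ Icc (0:ℝ) T, -ψx t L = bL t * w t L + ∑ i, gL t i * h i)
    -- (3) the homogeneous initial condition
    (heq3 : ∀ x ∈ Icc (0:ℝ) L, w 0 x = 0)
    -- (4) the backward adjoint equation
    (heq4 : ∀ t ∈ Icc (0:ℝ) T, ∀ x ∈ Icc (0:ℝ) L,
      φt t x = -(a t x * φxx t x) - v t x)
    -- (5) the adjoint boundary conditions
    (heq5a : ∀ t ∈ Icc (0:ℝ) T, a t 0 * φx t 0 = b₀ t * φ t 0)
    (heq5b : ∀ t ∈ Icc (0:ℝ) T, -(a t L * φx t L) = bL t * φ t L)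
    -- (6) the terminal condition
    (heq6 : ∀ x ∈ Icc (0:ℝ) L, φ T x = 0) :
    (∫ t in (0:ℝ)..T, ∫ x in (0:ℝ)..L, w t x * v t x) =
      ∑ i, h i * ∫ t in (0:ℝ)..T, (-(g₀ t i * φ t 0) - gL t i * φ t L) :=
  stmt_1_general T L hT hL m a v b₀ bL g₀ gL h hv hg₀ hgL w φ hwc hφc wt φt ψx ψxx φx φxx hwt hφt
    hψx hψxx hφx hφxx hwtc hφtc hψxxc hφxxc heq1 heq2a heq2b heq3 heq4 heq5a heq5b heq6
end

section
/- Let V be a real reflexive Banach space with continuous dual V* and duality pairing ⟨·,·⟩, and let A, B : V → V* be two pseudomonotone maps. Then the sum A + B (defined by (A+B)(u) = A(u) + B(u)) is pseudomonotone: it maps norm-bounded sets to norm-bounded sets, and whenever u_k ⇀ u weakly in V and limsup_{k→∞} ⟨A(u_k) + B(u_k), u_k − u⟩ ≤ 0, it follows that ⟨A(u) + B(u), u − v⟩ ≤ liminf_{k→∞} ⟨A(u_k) + B(u_k), u_k − v⟩ for every v ∈ V. -/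
/-!
If `limsup ⟨A u_k + B u_k, u_k − u⟩ ≤ 0`, then both `limsup ⟨A u_k, u_k − u⟩ ≤ 0` and
`limsup ⟨B u_k, u_k − u⟩ ≤ 0`. Indeed, if the first limsup were `L > 0`, then along a subsequence
`⟨A u_k, u_k − u⟩ > 2L/3` while the sum is eventually `< L/3`, so `⟨B u_k, u_k − u⟩ < −L/3` along
that subsequence; but pseudomonotonicity of `B`, tested with `v = u` on the subsequence, says that
a nonpositive limsup of these pairings forces a nonnegative liminf. Once both limsups are
nonpositive, the pseudomonotonicity inequalities of `A` and `B` add up, using `liminf a + liminf b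
≤ liminf (a + b)`. Every sequence involved is bounded, since weakly convergent sequences are
bounded by Banach–Steinhaus.
-/

open Filter

/-- A map `A : V → V*` is pseudomonotone if it maps bounded sets to bounded sets and,
whenever `u_k ⇀ u₀` weakly and `limsup ⟨A(u_k), u_k − u₀⟩ ≤ 0`, one has
`⟨A(u₀), u₀ − v⟩ ≤ liminf ⟨A(u_k), u_k − v⟩` for all `v`. -/
def Pseudomonotone {V : Type*} [NormedAddCommGroup V] [NormedSpace ℝ V]
    (A : V → StrongDual ℝ V) : Prop :=
  (∀ s : Set V, Bornology.IsBounded s → Bornology.IsBounded (A '' s)) ∧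
  ∀ (u : ℕ → V) (u₀ : V),
    (∀ f : StrongDual ℝ V, Tendsto (fun k => f (u k)) atTop (nhds (f u₀))) →
    limsup (fun k => A (u k) (u k - u₀)) atTop ≤ 0 →
    ∀ v : V, A u₀ (u₀ - v) ≤ liminf (fun k => A (u k) (u k - v)) atTop

open Set Bornology

theorem limsup_nonpos_of_limsup_add_nonpos {a b : ℕ → ℝ}
    (ha : IsBounded (range a)) (hb : IsBounded (range b))
    (hab : limsup (fun k => a k + b k) atTop ≤ 0)
    (hb_sub : ∀ φ : ℕ → ℕ, StrictMono φ →
      limsup (b ∘ φ) atTop ≤ 0 → 0 ≤ liminf (b ∘ φ) atTop) :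
    limsup a atTop ≤ 0 := by
  by_contra! hL
  set L := limsup a atTop
  have h_a : ∃ᶠ k in atTop, 2 * L / 3 < a k :=
    frequently_lt_of_lt_limsup ha.bddBelow.isBoundedUnder_of_range.isCoboundedUnder_le
      (by linarith)
  have h_ab : ∀ᶠ k in atTop, a k + b k < L / 3 := by
    have hab_bdd : IsBounded (range fun k => a k + b k) :=
      (ha.add hb).subset <| by rintro _ ⟨k, rfl⟩; exact add_mem_add ⟨k, rfl⟩ ⟨k, rfl⟩
    exact eventually_lt_of_limsup_lt (by linarith) hab_bdd.bddAbove.isBoundedUnder_of_range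
  obtain ⟨φ, hφ, h_bφ⟩ := extraction_of_frequently_atTop <|
    (h_a.and_eventually h_ab).mono fun k hk => show b k ≤ -(L / 3) by linarith [hk.1, hk.2]
  have hbφ : IsBounded (range (b ∘ φ)) := hb.subset (range_comp_subset_range φ b)
  have h_sup : limsup (b ∘ φ) atTop ≤ -(L / 3) :=
    limsup_le_of_le hbφ.bddBelow.isBoundedUnder_of_range.isCoboundedUnder_le
      (Eventually.of_forall h_bφ)
  have h_inf : liminf (b ∘ φ) atTop ≤ -(L / 3) :=
    (liminf_le_limsup hbφ.bddAbove.isBoundedUnder_of_range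
      hbφ.bddBelow.isBoundedUnder_of_range).trans h_sup
  linarith [hb_sub φ hφ (h_sup.trans (by linarith))]

theorem isBounded_range_of_forall_tendsto_dual {V : Type*} [NormedAddCommGroup V]
    [NormedSpace ℝ V] {u : ℕ → V} {u₀ : V}
    (hw : ∀ f : StrongDual ℝ V, Tendsto (fun k => f (u k)) atTop (nhds (f u₀))) :
    IsBounded (range u) := by
  obtain ⟨C, hC⟩ := banach_steinhaus (g := fun k => NormedSpace.inclusionInDoubleDualLi ℝ (u k))
    fun f => isBounded_iff_forall_norm_le.1 (Metric.isBounded_range_of_tendsto _ (hw f))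
      |>.imp fun C hC k => hC _ ⟨k, rfl⟩
  refine isBounded_iff_forall_norm_le.2 ⟨C, ?_⟩
  rintro _ ⟨k, rfl⟩
  simpa only [LinearIsometry.norm_map] using hC k

theorem isBounded_range_apply {ι 𝕜 E F : Type*} [NontriviallyNormedField 𝕜]
    [SeminormedAddCommGroup E] [NormedSpace 𝕜 E] [SeminormedAddCommGroup F] [NormedSpace 𝕜 F]
    {T : ι → E →L[𝕜] F} {x : ι → E} (hT : IsBounded (range T)) (hx : IsBounded (range x)) :
    IsBounded (range fun i => T i (x i)) := by
  obtain ⟨C, hC⟩ := isBounded_iff_forall_norm_le.1 hT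
  obtain ⟨M, hM⟩ := isBounded_iff_forall_norm_le.1 hx
  refine isBounded_iff_forall_norm_le.2 ⟨C * M, ?_⟩
  rintro _ ⟨i, rfl⟩
  calc ‖T i (x i)‖ ≤ ‖T i‖ * ‖x i‖ := (T i).le_opNorm (x i)
    _ ≤ C * M := mul_le_mul (hC _ ⟨i, rfl⟩) (hM _ ⟨i, rfl⟩) (norm_nonneg _)
        ((norm_nonneg _).trans (hC _ ⟨i, rfl⟩))

namespace Pseudomonotone

variable {V : Type*} [NormedAddCommGroup V] [NormedSpace ℝ V] {A : V → StrongDual ℝ V}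

theorem isBounded_range_apply_sub (hA : Pseudomonotone A) {u : ℕ → V}
    (hu : IsBounded (range u)) (w : V) : IsBounded (range fun k => A (u k) (u k - w)) := by
  refine isBounded_range_apply ?_ ?_
  · exact range_comp' A u ▸ hA.1 _ hu
  · exact (hu.sub isBounded_singleton).subset <| by
      rintro _ ⟨k, rfl⟩; exact sub_mem_sub ⟨k, rfl⟩ rfl

theorem liminf_nonneg_of_limsup_nonpos (hA : Pseudomonotone A) {u : ℕ → V} {u₀ : V}
    (hw : ∀ f : StrongDual ℝ V, Tendsto (fun k => f (u k)) atTop (nhds (f u₀)))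
    (h : limsup (fun k => A (u k) (u k - u₀)) atTop ≤ 0) :
    0 ≤ liminf (fun k => A (u k) (u k - u₀)) atTop := by
  simpa using hA.2 u u₀ hw h u₀

end Pseudomonotone

theorem stmt_3_general {V : Type*} [NormedAddCommGroup V] [NormedSpace ℝ V]
    (A B : V → StrongDual ℝ V)
    (hA : Pseudomonotone A) (hB : Pseudomonotone B) :
    Pseudomonotone (fun u => A u + B u) := by
  refine ⟨fun s hs => ?_, fun u u₀ hw hsum v => ?_⟩
  · exact ((hA.1 s hs).add (hB.1 s hs)).subset <| by
      rintro _ ⟨x, hx, rfl⟩; exact add_mem_add ⟨x, hx, rfl⟩ ⟨x, hx, rfl⟩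
  have hu := isBounded_range_of_forall_tendsto_dual hw
  have hw_sub (φ : ℕ → ℕ) (hφ : StrictMono φ) (f : StrongDual ℝ V) :
      Tendsto (fun k => f (u (φ k))) atTop (nhds (f u₀)) :=
    (hw f).comp hφ.tendsto_atTop
  have hA_lim : limsup (fun k => A (u k) (u k - u₀)) atTop ≤ 0 :=
    limsup_nonpos_of_limsup_add_nonpos (hA.isBounded_range_apply_sub hu u₀)
      (hB.isBounded_range_apply_sub hu u₀) hsum
      fun φ hφ => hB.liminf_nonneg_of_limsup_nonpos (hw_sub φ hφ)
  have hB_lim : limsup (fun k => B (u k) (u k - u₀)) atTop ≤ 0 :=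
    limsup_nonpos_of_limsup_add_nonpos (hB.isBounded_range_apply_sub hu u₀)
      (hA.isBounded_range_apply_sub hu u₀) (by simpa only [add_apply, add_comm] using hsum)
      fun φ hφ => hA.liminf_nonneg_of_limsup_nonpos (hw_sub φ hφ)
  have hAv := hA.isBounded_range_apply_sub hu v
  have hBv := hB.isBounded_range_apply_sub hu v
  calc (A u₀ + B u₀) (u₀ - v) = A u₀ (u₀ - v) + B u₀ (u₀ - v) := rfl
    _ ≤ liminf (fun k => A (u k) (u k - v)) atTop + liminf (fun k => B (u k) (u k - v)) atTop :=
        add_le_add (hA.2 u u₀ hw hA_lim v) (hB.2 u u₀ hw hB_lim v)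
    _ ≤ liminf (fun k => (A (u k) + B (u k)) (u k - v)) atTop :=
        le_liminf_add hAv.bddBelow.isBoundedUnder_of_range hAv.bddAbove.isBoundedUnder_of_range
          hBv.bddBelow.isBoundedUnder_of_range
          hBv.bddAbove.isBoundedUnder_of_range.isCoboundedUnder_ge

/-- On a real reflexive Banach space, the sum of two pseudomonotone maps `V → V*`
is pseudomonotone. -/
theorem stmt_3 {V : Type*} [NormedAddCommGroup V] [NormedSpace ℝ V] [CompleteSpace V]
    (hrefl : Function.Surjective (NormedSpace.inclusionInDoubleDual ℝ V))
    (A B : V → StrongDual ℝ V)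
    (hA : Pseudomonotone A) (hB : Pseudomonotone B) :
    Pseudomonotone (fun u => A u + B u) :=
  stmt_3_general A B hA hB
end

section
/- Let L > 0 and c_max > 0. Let α' : ℝ → ℝ be continuous with |α'(s)| ≤ c_max for all s ∈ ℝ. Let (u_k) be a sequence of measurable functions on [0,L] converging pointwise almost everywhere to a measurable function u : [0,L] → ℝ. Let p_k, p : [0,L] → ℝ be square-integrable on (0,L) with p_k ⇀ p weakly in L²(0,L), i.e. ∫₀ᴸ p_k(x) g(x) dx → ∫₀ᴸ p(x) g(x) dx for every g ∈ L²(0,L), and let q ∈ L²(0,L). Then ∫₀ᴸ α'(u_k(x)) q(x) (p_k(x) − p(x)) dx → 0 as k → ∞. -/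
/-!
Dominated convergence (with dominating function `c_max * |q|`) makes `α'(u_k) q` converge
strongly in `L²`, while `p_k - p` converges weakly to `0`. A weakly convergent sequence is bounded
by Banach–Steinhaus, and the inner product of a bounded weakly null sequence with a strongly
convergent one tends to `0`.
-/

open MeasureTheory Set Filter Topology
open scoped ENNReal InnerProductSpace

section WeakStrong

variable {𝕜 E : Type*} [RCLike 𝕜] [NormedAddCommGroup E] [InnerProductSpace 𝕜 E]
  [CompleteSpace E]

theorem exists_norm_le_of_tendsto_inner {x : ℕ → E} {x₀ : E}
    (hx : ∀ g, Tendsto (fun k => ⟪x k, g⟫_𝕜) atTop (𝓝 ⟪x₀, g⟫_𝕜)) :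
    ∃ C, ∀ k, ‖x k‖ ≤ C := by
  obtain ⟨C, hC⟩ : ∃ C, ∀ k, ‖innerSL 𝕜 (x k)‖ ≤ C := banach_steinhaus fun g => by
    obtain ⟨C, hC⟩ := (hx g).norm.bddAbove_range
    exact ⟨C, fun k => hC ⟨k, rfl⟩⟩
  exact ⟨C, fun k => innerSL_apply_norm 𝕜 (x k) ▸ hC k⟩

theorem tendsto_inner_of_weak_of_tendsto {x y : ℕ → E} {x₀ y₀ : E}
    (hx : ∀ g, Tendsto (fun k => ⟪x k, g⟫_𝕜) atTop (𝓝 ⟪x₀, g⟫_𝕜))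
    (hy : Tendsto y atTop (𝓝 y₀)) :
    Tendsto (fun k => ⟪x k, y k⟫_𝕜) atTop (𝓝 ⟪x₀, y₀⟫_𝕜) := by
  obtain ⟨C, hC⟩ := exists_norm_le_of_tendsto_inner hx
  have hbound : Tendsto (fun k => C * ‖y k - y₀‖) atTop (𝓝 0) := by
    simpa using (tendsto_iff_norm_sub_tendsto_zero.1 hy).const_mul C
  have hsmall : Tendsto (fun k => ⟪x k, y k - y₀⟫_𝕜) atTop (𝓝 0) :=
    squeeze_zero_norm (fun k => (norm_inner_le_norm _ _).trans
      (mul_le_mul_of_nonneg_right (hC k) (norm_nonneg _))) hbound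
  simpa [inner_sub_right] using hsmall.add (hx y₀)

end WeakStrong

section Dominated

variable {α β ι : Type*} {m : MeasurableSpace α} {μ : Measure α} [NormedAddCommGroup β]
  {p : ℝ≥0∞} {g : α → ℝ}

theorem unifIntegrable_of_dominated {f : ι → α → β} (hp : 1 ≤ p) (hp' : p ≠ ∞)
    (hg : MemLp g p μ) (hfg : ∀ i, ∀ᵐ x ∂μ, ‖f i x‖ ≤ g x) : UnifIntegrable f p μ := by
  intro ε hε
  obtain ⟨δ, hδ, hgδ⟩ := unifIntegrable_const (ι := Unit) hp hp' hg hε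
  refine ⟨δ, hδ, fun i s hs hμs => (eLpNorm_mono_ae ?_).trans (hgδ () s hs hμs)⟩
  filter_upwards [hfg i] with x hx
  simp only [norm_indicator_eq_indicator_norm]
  exact indicator_le_indicator (hx.trans (Real.le_norm_self _))

theorem unifTight_of_dominated {f : ι → α → β} (hp' : p ≠ ∞)
    (hg : MemLp g p μ) (hfg : ∀ i, ∀ᵐ x ∂μ, ‖f i x‖ ≤ g x) : UnifTight f p μ := by
  intro ε hε
  obtain ⟨s, hμs, hgs⟩ := unifTight_const (ι := Unit) hp' hg hε
  refine ⟨s, hμs, fun i => (eLpNorm_mono_ae ?_).trans (hgs ())⟩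
  filter_upwards [hfg i] with x hx
  simp only [norm_indicator_eq_indicator_norm]
  exact indicator_le_indicator (hx.trans (Real.le_norm_self _))

theorem tendsto_eLpNorm_sub_of_dominated {f : ℕ → α → β} {f₀ : α → β} (hp : 1 ≤ p)
    (hp' : p ≠ ∞) (hf : ∀ n, AEStronglyMeasurable (f n) μ) (hg : MemLp g p μ)
    (hfg : ∀ n, ∀ᵐ x ∂μ, ‖f n x‖ ≤ g x)
    (hlim : ∀ᵐ x ∂μ, Tendsto (fun n => f n x) atTop (𝓝 (f₀ x))) :
    Tendsto (fun n => eLpNorm (f n - f₀) p μ) atTop (𝓝 0) := by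
  have hf₀g : ∀ᵐ x ∂μ, ‖f₀ x‖ ≤ ‖g x‖ := by
    filter_upwards [hlim, ae_all_iff.2 hfg] with x hx hxg
    exact le_of_tendsto' hx.norm fun n => (hxg n).trans (Real.le_norm_self _)
  have hf₀ : MemLp f₀ p μ := hg.of_le (aestronglyMeasurable_of_tendsto_ae _ hf hlim) hf₀g
  exact tendsto_Lp_of_tendsto_ae hp hp' hf hf₀ (unifIntegrable_of_dominated hp hp' hg hfg)
    (unifTight_of_dominated hp' hg hfg) hlim

end Dominated

theorem MeasureTheory.L2.real_inner_toLp {α : Type*} {m : MeasurableSpace α} {μ : Measure α}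
    {f g : α → ℝ} (hf : MemLp f 2 μ) (hg : MemLp g 2 μ) :
    ⟪hf.toLp f, hg.toLp g⟫_ℝ = ∫ x, f x * g x ∂μ := by
  rw [L2.inner_def]
  refine integral_congr_ae ?_
  filter_upwards [hf.coeFn_toLp, hg.coeFn_toLp] with x hfx hgx
  simp [hfx, hgx, mul_comm]

theorem stmt_5_general (L c_max : ℝ)
    (α' : ℝ → ℝ) (hα : Continuous α') (hbound : ∀ s : ℝ, |α' s| ≤ c_max)
    (u : ℕ → ℝ → ℝ) (u₀ : ℝ → ℝ) (hum : ∀ k, Measurable (u k)) (hu₀ : Measurable u₀)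
    (hptw : ∀ᵐ x ∂(volume.restrict (Ioo 0 L)),
      Tendsto (fun k => u k x) atTop (nhds (u₀ x)))
    (p : ℕ → ℝ → ℝ) (p₀ q : ℝ → ℝ)
    (hpk : ∀ k, MemLp (p k) 2 (volume.restrict (Ioo 0 L)))
    (hp₀ : MemLp p₀ 2 (volume.restrict (Ioo 0 L)))
    (hq : MemLp q 2 (volume.restrict (Ioo 0 L)))
    (hweak : ∀ g : ℝ → ℝ, MemLp g 2 (volume.restrict (Ioo 0 L)) →
      Tendsto (fun k => ∫ x in Ioo 0 L, p k x * g x) atTop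
        (nhds (∫ x in Ioo 0 L, p₀ x * g x))) :
    Tendsto (fun k => ∫ x in Ioo 0 L, α' (u k x) * q x * (p k x - p₀ x)) atTop (nhds 0) := by
  set μ := volume.restrict (Ioo (0 : ℝ) L)
  have hdom (v : ℝ → ℝ) (x : ℝ) : ‖α' (v x) * q x‖ ≤ c_max * ‖q x‖ := by
    rw [norm_mul]
    exact mul_le_mul_of_nonneg_right (hbound _) (norm_nonneg _)
  have hmemLp (v : ℝ → ℝ) (hv : Measurable v) : MemLp (fun x => α' (v x) * q x) 2 μ :=
    hq.of_le_mul ((hα.measurable.comp hv).aestronglyMeasurable.mul hq.1) (.of_forall (hdom v))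
  have hF : Tendsto (fun k => (hmemLp _ (hum k)).toLp _) atTop
      (𝓝 ((hmemLp u₀ hu₀).toLp _)) := by
    rw [Lp.tendsto_Lp_iff_tendsto_eLpNorm'']
    exact tendsto_eLpNorm_sub_of_dominated one_le_two ENNReal.ofNat_ne_top
      (fun k => (hmemLp _ (hum k)).1) (hq.norm.const_mul c_max)
      (fun k => .of_forall (hdom (u k)))
      (hptw.mono fun x hx => ((hα.tendsto _).comp hx).mul_const (q x))
  have hP (G : Lp ℝ 2 μ) : Tendsto (fun k => ⟪(hpk k).toLp (p k), G⟫_ℝ) atTop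
      (𝓝 ⟪hp₀.toLp p₀, G⟫_ℝ) := by
    rw [← Lp.toLp_coeFn G (Lp.memLp G)]
    simp_rw [L2.real_inner_toLp]
    exact hweak G (Lp.memLp G)
  have hlim := (tendsto_inner_of_weak_of_tendsto hP hF).sub ((tendsto_const_nhds (x := hp₀.toLp p₀)).inner hF)
  rw [sub_self] at hlim
  refine hlim.congr fun k => ?_
  rw [← inner_sub_left, ← MemLp.toLp_sub, L2.real_inner_toLp]
  refine integral_congr_ae (.of_forall fun x => ?_)
  simp only [Pi.sub_apply]
  ring

/-- If `u_k → u` pointwise a.e. on `(0,L)`, `|α'| ≤ c_max`, `p_k ⇀ p` weakly in `L²(0,L)` and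
`q ∈ L²(0,L)`, then `∫ α'(u_k) q (p_k − p) → 0`. -/
theorem stmt_5 (L c_max : ℝ) (hL : 0 < L) (hc : 0 < c_max)
    (α' : ℝ → ℝ) (hα : Continuous α') (hbound : ∀ s : ℝ, |α' s| ≤ c_max)
    (u : ℕ → ℝ → ℝ) (u₀ : ℝ → ℝ) (hum : ∀ k, Measurable (u k)) (hu₀ : Measurable u₀)
    (hptw : ∀ᵐ x ∂(volume.restrict (Ioo 0 L)),
      Tendsto (fun k => u k x) atTop (nhds (u₀ x)))
    (p : ℕ → ℝ → ℝ) (p₀ q : ℝ → ℝ)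
    (hpk : ∀ k, MemLp (p k) 2 (volume.restrict (Ioo 0 L)))
    (hp₀ : MemLp p₀ 2 (volume.restrict (Ioo 0 L)))
    (hq : MemLp q 2 (volume.restrict (Ioo 0 L)))
    (hweak : ∀ g : ℝ → ℝ, MemLp g 2 (volume.restrict (Ioo 0 L)) →
      Tendsto (fun k => ∫ x in Ioo 0 L, p k x * g x) atTop
        (nhds (∫ x in Ioo 0 L, p₀ x * g x))) :
    Tendsto (fun k => ∫ x in Ioo 0 L, α' (u k x) * q x * (p k x - p₀ x)) atTop (nhds 0) :=
  stmt_5_general L c_max α' hα hbound u u₀ hum hu₀ hptw p p₀ q hpk hp₀ hq hweak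
end

section
/- Let V be a real Banach space with continuous dual V* and duality pairing ⟨·,·⟩. Let B : V × V → V* be a map satisfying: (i) for every w ∈ V the map B(w,·) is monotone, i.e. ⟨B(w,u) − B(w,v), u − v⟩ ≥ 0 for all u, v ∈ V; (ii) for all u, v, z ∈ V the map ε ↦ ⟨B(u, (1−ε)u + εv), z⟩ is continuous at ε = 0; (iii) whenever u_k ⇀ u weakly in V, one has ⟨B(u_k, v), z⟩ → ⟨B(u, v), z⟩ for all v, z ∈ V, and ⟨B(u_k, v), u_k − u⟩ → 0 for all v ∈ V. Define A : V → V* by A(u) := B(u,u) and assume A maps norm-bounded sets to norm-bounded sets. Then A is pseudomonotone: whenever u_k ⇀ u weakly in V and limsup_{k→∞} ⟨A(u_k), u_k − u⟩ ≤ 0, it follows that ⟨A(u), u − v⟩ ≤ liminf_{k→∞} ⟨A(u_k), u_k − v⟩ for every v ∈ V. -/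
/-!
Weakly convergent sequences are bounded, so `A u_k` is bounded and all the real sequences
`⟨A u_k, u_k - w⟩` below have finite liminf and limsup. Monotonicity of `B (u_k, ·)` together with
(iii) forces `⟨A u_k, u_k - u⟩ → 0` and `⟨B(u, z), u - z⟩ ≤ liminf ⟨A u_k, u_k - z⟩` for every `z`.
For `z = (1 - ε) u + ε v` the right-hand side is `ε liminf ⟨A u_k, u_k - v⟩` and the left-hand side
is `ε ⟨B(u, z), u - v⟩`; dividing by `ε` and letting `ε → 0⁺` (hemicontinuity (ii)) is Minty's trick.
-/

open Filter Topology Set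

theorem isBounded_range_of_forall_bddAbove_norm_dual {𝕜 E ι : Type*} [RCLike 𝕜]
    [NormedAddCommGroup E] [NormedSpace 𝕜 E] {u : ι → E}
    (h : ∀ f : StrongDual 𝕜 E, BddAbove (range fun k => ‖f (u k)‖)) :
    Bornology.IsBounded (range u) := by
  obtain ⟨C, hC⟩ := banach_steinhaus (g := fun k => NormedSpace.inclusionInDoubleDualLi 𝕜 (u k))
    fun f => (h f).imp fun C hC k => hC (mem_range_self k)
  refine isBounded_iff_forall_norm_le.2 ⟨C, ?_⟩
  rintro _ ⟨k, rfl⟩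
  rw [← (NormedSpace.inclusionInDoubleDualLi 𝕜).norm_map]
  exact hC k

theorem isBounded_range_of_weak_tendsto {𝕜 E : Type*} [RCLike 𝕜]
    [NormedAddCommGroup E] [NormedSpace 𝕜 E] {u : ℕ → E} {x : E}
    (h : ∀ f : StrongDual 𝕜 E, Tendsto (fun k => f (u k)) atTop (𝓝 (f x))) :
    Bornology.IsBounded (range u) :=
  isBounded_range_of_forall_bddAbove_norm_dual fun f => (h f).norm.bddAbove_range

theorem isBoundedUnder_abs_apply_sub {V ι : Type*} [NormedAddCommGroup V] [NormedSpace ℝ V]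
    {f : ι → StrongDual ℝ V} {u : ι → V} (l : Filter ι) (hf : Bornology.IsBounded (range f))
    (hu : Bornology.IsBounded (range u)) (w : V) :
    IsBoundedUnder (· ≤ ·) l fun k => |f k (u k - w)| := by
  obtain ⟨C, hC⟩ := isBounded_iff_forall_norm_le.1 hf
  obtain ⟨M, hM⟩ := isBounded_iff_forall_norm_le.1 hu
  refine isBoundedUnder_of ⟨C * (M + ‖w‖), fun k => ?_⟩
  calc |f k (u k - w)| ≤ ‖f k‖ * ‖u k - w‖ := (f k).le_opNorm _
    _ ≤ C * (M + ‖w‖) := by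
      gcongr
      · exact (norm_nonneg _).trans (hC _ (mem_range_self k))
      · exact hC _ (mem_range_self k)
      · exact (norm_sub_le _ _).trans (by gcongr; exact hM _ (mem_range_self k))

theorem Real.liminf_add_const_mul_le {ι : Type*} {l : Filter ι} [l.NeBot] {x y : ι → ℝ}
    (hx : Tendsto x l (𝓝 0)) (hy : IsBoundedUnder (· ≤ ·) l fun k => |y k|) {c : ℝ}
    (hc : 0 ≤ c) : liminf (fun k => x k + c * y k) l ≤ c * liminf y l := by
  have hcy : IsBoundedUnder (· ≤ ·) l fun k => |c * y k| := by
    simpa only [abs_mul, abs_of_nonneg hc, Function.comp_def] using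
      (monotone_mul_left_of_nonneg hc).isBoundedUnder_le_comp hy
  obtain ⟨hy_le, hy_ge⟩ := isBoundedUnder_le_abs.1 hy
  obtain ⟨hcy_le, hcy_ge⟩ := isBoundedUnder_le_abs.1 hcy
  calc liminf (fun k => x k + c * y k) l
      ≤ limsup x l + liminf (fun k => c * y k) l :=
        liminf_add_le hx.isBoundedUnder_ge hx.isBoundedUnder_le hcy_ge hcy_le.isCoboundedUnder_ge
    _ = c * liminf y l := by
      rw [hx.limsup_eq, zero_add]
      exact (Monotone.map_liminf_of_continuousAt (monotone_mul_left_of_nonneg hc) y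
        (continuous_const_mul c).continuousAt hy_le.isCoboundedUnder_ge hy_ge).symm

theorem le_liminf_of_tendsto_of_le {α ι : Type*} [ConditionallyCompleteLinearOrder α]
    [TopologicalSpace α] [OrderTopology α] {l : Filter ι} [l.NeBot] {x y : ι → α} {a : α}
    (hx : Tendsto x l (𝓝 a)) (hxy : ∀ᶠ k in l, x k ≤ y k)
    (hy : IsBoundedUnder (· ≤ ·) l y := by isBoundedDefault) : a ≤ liminf y l :=
  hx.liminf_eq ▸ liminf_le_liminf hxy hx.isBoundedUnder_ge hy.isCoboundedUnder_ge

section MintyTrick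

variable {V : Type*} [NormedAddCommGroup V] [NormedSpace ℝ V] {B : V → V → StrongDual ℝ V}
  {u : ℕ → V} {u₀ : V}

theorem apply_sub_le_of_monotone (hmono : ∀ w u v : V, 0 ≤ (B w u - B w v) (u - v))
    (w x z : V) : B w z (x - z) ≤ B w x (x - z) := by
  simpa using hmono w x z

theorem tendsto_apply_sub_of_limsup_le (hmono : ∀ w u v : V, 0 ≤ (B w u - B w v) (u - v))
    (hBsub : Tendsto (fun k => B (u k) u₀ (u k - u₀)) atTop (𝓝 0))
    (hlimsup : limsup (fun k => B (u k) (u k) (u k - u₀)) atTop ≤ 0)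
    (hbdd : IsBoundedUnder (· ≤ ·) atTop fun k => |B (u k) (u k) (u k - u₀)|) :
    Tendsto (fun k => B (u k) (u k) (u k - u₀)) atTop (𝓝 0) := by
  obtain ⟨hle, hge⟩ := isBoundedUnder_le_abs.1 hbdd
  refine tendsto_of_le_liminf_of_limsup_le ?_ hlimsup hle hge
  exact le_liminf_of_tendsto_of_le hBsub
    (Eventually.of_forall fun k => apply_sub_le_of_monotone hmono _ _ _) hle

theorem le_liminf_apply_sub (hmono : ∀ w u v : V, 0 ≤ (B w u - B w v) (u - v)) {z : V}
    (hB : Tendsto (fun k => B (u k) z (u₀ - z)) atTop (𝓝 (B u₀ z (u₀ - z))))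
    (hBsub : Tendsto (fun k => B (u k) z (u k - u₀)) atTop (𝓝 0))
    (hbdd : IsBoundedUnder (· ≤ ·) atTop fun k => B (u k) (u k) (u k - z)) :
    B u₀ z (u₀ - z) ≤ liminf (fun k => B (u k) (u k) (u k - z)) atTop := by
  have hz : Tendsto (fun k => B (u k) z (u k - z)) atTop (𝓝 (B u₀ z (u₀ - z))) := by
    simpa only [← map_add, sub_add_sub_cancel, zero_add] using hBsub.add hB
  exact le_liminf_of_tendsto_of_le hz
    (Eventually.of_forall fun k => apply_sub_le_of_monotone hmono _ _ _) hbdd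

theorem apply_segment_le_liminf (hmono : ∀ w u v : V, 0 ≤ (B w u - B w v) (u - v))
    (hB : ∀ v z : V, Tendsto (fun k => B (u k) v z) atTop (𝓝 (B u₀ v z)))
    (hBsub : ∀ v : V, Tendsto (fun k => B (u k) v (u k - u₀)) atTop (𝓝 0))
    (hbdd : ∀ w : V, IsBoundedUnder (· ≤ ·) atTop fun k => |B (u k) (u k) (u k - w)|)
    (ha₀ : Tendsto (fun k => B (u k) (u k) (u k - u₀)) atTop (𝓝 0)) (v : V) {ε : ℝ}
    (hε : 0 < ε) :
    B u₀ ((1 - ε) • u₀ + ε • v) (u₀ - v) ≤ liminf (fun k => B (u k) (u k) (u k - v)) atTop := by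
  set z := (1 - ε) • u₀ + ε • v
  have hz : u₀ - z = ε • (u₀ - v) := by module
  have hsplit : ∀ k, B (u k) (u k) (u k - z) =
      (1 - ε) * B (u k) (u k) (u k - u₀) + ε * B (u k) (u k) (u k - v) := fun k => by
    rw [show u k - z = (1 - ε) • (u k - u₀) + ε • (u k - v) by module]
    simp only [map_add, map_smul, smul_eq_mul]
  have hlow := le_liminf_apply_sub hmono (hB z (u₀ - z)) (hBsub z)
    (isBoundedUnder_le_abs.1 (hbdd z)).1
  have hupp := Real.liminf_add_const_mul_le
    (by simpa only [mul_zero] using ha₀.const_mul (1 - ε)) (hbdd v) hε.le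
  rw [hz, map_smul, smul_eq_mul] at hlow
  simp only [hsplit] at hlow
  exact le_of_mul_le_mul_left (hlow.trans hupp) hε

end MintyTrick

theorem stmt_6_general {V : Type*} [NormedAddCommGroup V] [NormedSpace ℝ V]
    (B : V → V → StrongDual ℝ V)
    (hmono : ∀ w u v : V, 0 ≤ (B w u - B w v) (u - v))
    (hcont : ∀ u v z : V, ContinuousAt (fun ε : ℝ => B u ((1 - ε) • u + ε • v) z) 0)
    (hweakB : ∀ (u : ℕ → V) (u₀ : V),
      (∀ f : StrongDual ℝ V, Tendsto (fun k => f (u k)) atTop (nhds (f u₀))) →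
      (∀ v z : V, Tendsto (fun k => B (u k) v z) atTop (nhds (B u₀ v z))) ∧
      (∀ v : V, Tendsto (fun k => B (u k) v (u k - u₀)) atTop (nhds 0)))
    (hbdd : ∀ s : Set V, Bornology.IsBounded s →
      Bornology.IsBounded ((fun u => B u u) '' s))
    (u : ℕ → V) (u₀ : V)
    (hweak : ∀ f : StrongDual ℝ V, Tendsto (fun k => f (u k)) atTop (nhds (f u₀)))
    (hlimsup : limsup (fun k => B (u k) (u k) (u k - u₀)) atTop ≤ 0) :
    ∀ v : V, B u₀ u₀ (u₀ - v) ≤ liminf (fun k => B (u k) (u k) (u k - v)) atTop := by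
  intro v
  have hu := isBounded_range_of_weak_tendsto hweak
  have hbdd_apply :=
    isBoundedUnder_abs_apply_sub atTop (range_comp (fun u => B u u) u ▸ hbdd _ hu) hu
  obtain ⟨hB, hBsub⟩ := hweakB u u₀ hweak
  have ha₀ := tendsto_apply_sub_of_limsup_le hmono (hBsub u₀) hlimsup (hbdd_apply u₀)
  have hseg := (hcont u₀ v (u₀ - v)).tendsto.mono_left (nhdsWithin_le_nhds (s := Ioi 0))
  simp only [sub_zero, one_smul, zero_smul, add_zero] at hseg
  exact le_of_tendsto hseg <| eventually_mem_nhdsWithin.mono fun ε hε =>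
    apply_segment_le_liminf hmono hB hBsub hbdd_apply ha₀ v hε

/-- Minty-trick argument: if `B : V × V → V*` is monotone in its second argument,
hemicontinuous along segments, satisfies the weak-convergence conditions (iii), and
`A(u) := B(u,u)` maps bounded sets to bounded sets, then `A` is pseudomonotone. -/
theorem stmt_6 {V : Type*} [NormedAddCommGroup V] [NormedSpace ℝ V] [CompleteSpace V]
    (B : V → V → StrongDual ℝ V)
    (hmono : ∀ w u v : V, 0 ≤ (B w u - B w v) (u - v))
    (hcont : ∀ u v z : V, ContinuousAt (fun ε : ℝ => B u ((1 - ε) • u + ε • v) z) 0)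
    (hweakB : ∀ (u : ℕ → V) (u₀ : V),
      (∀ f : StrongDual ℝ V, Tendsto (fun k => f (u k)) atTop (nhds (f u₀))) →
      (∀ v z : V, Tendsto (fun k => B (u k) v z) atTop (nhds (B u₀ v z))) ∧
      (∀ v : V, Tendsto (fun k => B (u k) v (u k - u₀)) atTop (nhds 0)))
    (hbdd : ∀ s : Set V, Bornology.IsBounded s →
      Bornology.IsBounded ((fun u => B u u) '' s))
    (u : ℕ → V) (u₀ : V)
    (hweak : ∀ f : StrongDual ℝ V, Tendsto (fun k => f (u k)) atTop (nhds (f u₀)))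
    (hlimsup : limsup (fun k => B (u k) (u k) (u k - u₀)) atTop ≤ 0) :
    ∀ v : V, B u₀ u₀ (u₀ - v) ≤ liminf (fun k => B (u k) (u k) (u k - v)) atTop :=
  stmt_6_general B hmono hcont hweakB hbdd u u₀ hweak hlimsup
end

section
/- Let L > 0, c_max > 0, β_max > 0 and c_c > 0. Let α' : ℝ → ℝ be continuous with 0 < α'(s) ≤ c_max for all s ∈ ℝ, and let β₀, β_L : ℝ → ℝ satisfy |β₀(s)| ≤ β_max and |β_L(s)| ≤ β_max for all s ∈ ℝ. Assume the embedding property: every continuously differentiable w : [0,L] → ℝ satisfies max_{x ∈ [0,L]} |w(x)| ≤ c_c ‖w‖_V. Then for all continuously differentiable u, v : [0,L] → ℝ, | ∫₀ᴸ α'(u(x)) u'(x) v'(x) dx + β_L(u(L)) v(L) + β₀(u(0)) v(0) | ≤ max(c_max, 2 β_max c_c) · (1 + ‖u‖_V) · ‖v‖_V. -/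
/-! Since `|α'| ≤ c_max`, Cauchy–Schwarz bounds the integral by `c_max ‖u'‖_{L²} ‖v'‖_{L²}
≤ c_max ‖u‖_V ‖v‖_V`, and the embedding bounds each boundary term by `β_max c_c ‖v‖_V`. -/

open Set

/-- The `W^{1,2}(0,L)`-norm of a function: `‖w‖_V = sqrt(∫ w² + ∫ (w')²)`. -/
noncomputable def vNorm (L : ℝ) (w : ℝ → ℝ) : ℝ :=
  Real.sqrt ((∫ x in (0:ℝ)..L, w x ^ 2) + ∫ x in (0:ℝ)..L, deriv w x ^ 2)

open MeasureTheory

theorem MeasureTheory.integral_abs_mul_abs_le_sqrt_mul_sqrt {α : Type*} [MeasurableSpace α]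
    {μ : Measure α} {f g : α → ℝ} (hf : MemLp f 2 μ) (hg : MemLp g 2 μ) :
    ∫ x, |f x| * |g x| ∂μ ≤ √(∫ x, f x ^ 2 ∂μ) * √(∫ x, g x ^ 2 ∂μ) := by
  have h2 : ENNReal.ofReal 2 = 2 := by norm_num
  have holder := integral_mul_norm_le_Lp_mul_Lq Real.HolderConjugate.two_two
    (h2 ▸ hf) (h2 ▸ hg)
  simpa only [Real.norm_eq_abs, ← Real.sqrt_eq_rpow, Real.rpow_two, sq_abs] using holder

theorem intervalIntegral.integral_abs_mul_abs_le_sqrt_mul_sqrt {a b : ℝ} (hab : a ≤ b)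
    {f g : ℝ → ℝ} (hf : Continuous f) (hg : Continuous g) :
    ∫ x in a..b, |f x| * |g x| ≤ √(∫ x in a..b, f x ^ 2) * √(∫ x in a..b, g x ^ 2) := by
  have memLp {h : ℝ → ℝ} (hh : Continuous h) : MemLp h 2 (volume.restrict (Ioc a b)) :=
    (memLp_two_iff_integrable_sq hh.aestronglyMeasurable).2 <|
      (intervalIntegrable_iff_integrableOn_Ioc_of_le hab).1 ((hh.pow 2).intervalIntegrable a b)
  simp only [intervalIntegral.integral_of_le hab]
  exact MeasureTheory.integral_abs_mul_abs_le_sqrt_mul_sqrt (memLp hf) (memLp hg)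

theorem intervalIntegral.abs_integral_mul_mul_le {a b C : ℝ} (hab : a ≤ b) {k f g : ℝ → ℝ}
    (hk : Continuous k) (hkC : ∀ x ∈ Icc a b, |k x| ≤ C) (hf : Continuous f) (hg : Continuous g) :
    |∫ x in a..b, k x * f x * g x| ≤ C * √(∫ x in a..b, f x ^ 2) * √(∫ x in a..b, g x ^ 2) := by
  have hC : 0 ≤ C := (abs_nonneg _).trans (hkC a ⟨le_rfl, hab⟩)
  have pointwise : ∀ x ∈ Icc a b, |k x * f x * g x| ≤ C * (|f x| * |g x|) := fun x hx => by
    rw [abs_mul, abs_mul, mul_assoc]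
    exact mul_le_mul_of_nonneg_right (hkC x hx) (by positivity)
  calc |∫ x in a..b, k x * f x * g x|
      ≤ ∫ x in a..b, |k x * f x * g x| := intervalIntegral.abs_integral_le_integral_abs hab
    _ ≤ ∫ x in a..b, C * (|f x| * |g x|) :=
        intervalIntegral.integral_mono_on hab (((hk.mul hf).mul hg).abs.intervalIntegrable _ _)
          ((continuous_const.mul (hf.abs.mul hg.abs)).intervalIntegrable _ _) pointwise
    _ = C * ∫ x in a..b, |f x| * |g x| := intervalIntegral.integral_const_mul _ _
    _ ≤ C * (√(∫ x in a..b, f x ^ 2) * √(∫ x in a..b, g x ^ 2)) :=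
        mul_le_mul_of_nonneg_left (integral_abs_mul_abs_le_sqrt_mul_sqrt hab hf hg) hC
    _ = _ := (mul_assoc _ _ _).symm

theorem vNorm_nonneg (L : ℝ) (w : ℝ → ℝ) : 0 ≤ vNorm L w := Real.sqrt_nonneg _

theorem sqrt_integral_deriv_sq_le_vNorm {L : ℝ} (hL : 0 ≤ L) (w : ℝ → ℝ) :
    √(∫ x in (0:ℝ)..L, deriv w x ^ 2) ≤ vNorm L w := by
  refine Real.sqrt_le_sqrt (le_add_of_nonneg_left ?_)
  exact intervalIntegral.integral_nonneg hL fun x _ => sq_nonneg _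

theorem abs_integral_mul_deriv_mul_deriv_le_vNorm {L C : ℝ} (hL : 0 ≤ L) {k u v : ℝ → ℝ}
    (hk : Continuous k) (hkC : ∀ x ∈ Icc 0 L, |k x| ≤ C) (hu : ContDiff ℝ 1 u)
    (hv : ContDiff ℝ 1 v) :
    |∫ x in (0:ℝ)..L, k x * deriv u x * deriv v x| ≤ C * vNorm L u * vNorm L v := by
  refine (intervalIntegral.abs_integral_mul_mul_le hL hk hkC
    (hu.continuous_deriv le_rfl) (hv.continuous_deriv le_rfl)).trans ?_
  have hC : 0 ≤ C := (abs_nonneg _).trans (hkC 0 ⟨le_rfl, hL⟩)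
  have hu' := sqrt_integral_deriv_sq_le_vNorm hL u
  have hv' := sqrt_integral_deriv_sq_le_vNorm hL v
  have := vNorm_nonneg L u
  gcongr

theorem stmt_8_general (L c_max β_max c_c : ℝ) (hL : 0 < L)
    (α' : ℝ → ℝ) (hα : Continuous α') (hαpos : ∀ s : ℝ, 0 < α' s)
    (hαb : ∀ s : ℝ, α' s ≤ c_max)
    (β₀ βL : ℝ → ℝ) (hβ₀ : ∀ s : ℝ, |β₀ s| ≤ β_max) (hβL : ∀ s : ℝ, |βL s| ≤ β_max)
    (hemb : ∀ w : ℝ → ℝ, ContDiff ℝ 1 w → ∀ x ∈ Icc (0:ℝ) L, |w x| ≤ c_c * vNorm L w)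
    (u v : ℝ → ℝ) (hu : ContDiff ℝ 1 u) (hv : ContDiff ℝ 1 v) :
    |(∫ x in (0:ℝ)..L, α' (u x) * deriv u x * deriv v x) + βL (u L) * v L + β₀ (u 0) * v 0| ≤
      max c_max (2 * β_max * c_c) * (1 + vNorm L u) * vNorm L v := by
  set Nu := vNorm L u
  set Nv := vNorm L v
  have hNu : 0 ≤ Nu := vNorm_nonneg L u
  have hNv : 0 ≤ Nv := vNorm_nonneg L v
  have hβ : 0 ≤ β_max := (abs_nonneg _).trans (hβ₀ 0)
  have interior : |∫ x in (0:ℝ)..L, α' (u x) * deriv u x * deriv v x| ≤ c_max * Nu * Nv :=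
    abs_integral_mul_deriv_mul_deriv_le_vNorm hL.le (hα.comp hu.continuous)
      (fun x _ => (abs_of_pos (hαpos _)).trans_le (hαb _)) hu hv
  have boundary {β : ℝ → ℝ} (hβb : ∀ s, |β s| ≤ β_max) (s x : ℝ) (hx : x ∈ Icc 0 L) :
      |β s * v x| ≤ β_max * (c_c * Nv) := by
    rw [abs_mul]
    exact mul_le_mul (hβb s) (hemb v hv x hx) (abs_nonneg _) hβ
  have hNuNv : 0 ≤ Nu * Nv := mul_nonneg hNu hNv
  calc _ ≤ |∫ x in (0:ℝ)..L, α' (u x) * deriv u x * deriv v x| + |βL (u L) * v L|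
          + |β₀ (u 0) * v 0| := abs_add_three _ _ _
    _ ≤ c_max * Nu * Nv + β_max * (c_c * Nv) + β_max * (c_c * Nv) := by
        gcongr
        · exact boundary hβL _ L ⟨hL.le, le_rfl⟩
        · exact boundary hβ₀ _ 0 ⟨le_rfl, hL.le⟩
    _ = c_max * (Nu * Nv) + 2 * β_max * c_c * Nv := by ring
    _ ≤ max c_max (2 * β_max * c_c) * (Nu * Nv) + max c_max (2 * β_max * c_c) * Nv := by
        gcongr
        exacts [le_max_left _ _, le_max_right _ _]
    _ = _ := by ring

/-- Growth condition `|⟨A(u),v⟩| ≤ max(c_max, 2 β_max c_c)(1 + ‖u‖_V)‖v‖_V` for the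
quasilinear heat operator with bounded heat fluxes on the boundary. -/
theorem stmt_8 (L c_max β_max c_c : ℝ) (hL : 0 < L) (hcmax : 0 < c_max)
    (hβmax : 0 < β_max) (hcc : 0 < c_c)
    (α' : ℝ → ℝ) (hα : Continuous α') (hαpos : ∀ s : ℝ, 0 < α' s)
    (hαb : ∀ s : ℝ, α' s ≤ c_max)
    (β₀ βL : ℝ → ℝ) (hβ₀ : ∀ s : ℝ, |β₀ s| ≤ β_max) (hβL : ∀ s : ℝ, |βL s| ≤ β_max)
    (hemb : ∀ w : ℝ → ℝ, ContDiff ℝ 1 w → ∀ x ∈ Icc (0:ℝ) L, |w x| ≤ c_c * vNorm L w)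
    (u v : ℝ → ℝ) (hu : ContDiff ℝ 1 u) (hv : ContDiff ℝ 1 v) :
    |(∫ x in (0:ℝ)..L, α' (u x) * deriv u x * deriv v x) + βL (u L) * v L + β₀ (u 0) * v 0| ≤
      max c_max (2 * β_max * c_c) * (1 + vNorm L u) * vNorm L v :=
  stmt_8_general L c_max β_max c_c hL α' hα hαpos hαb β₀ βL hβ₀ hβL hemb u v hu hv
end

section
/- Let L > 0, β'_max > 0 and c_c > 0, and set c_u := 2 β'_max c_c². Assume the embedding property: every continuously differentiable w : [0,L] → ℝ satisfies max_{x ∈ [0,L]} |w(x)| ≤ c_c ‖w‖_V. Let β₀, β_L : ℝ → ℝ be differentiable with |β₀'(s)| ≤ β'_max and |β_L'(s)| ≤ β'_max for all s ∈ ℝ. Let α' : ℝ → ℝ, let α'_c ≥ c_u, and let u, v : [0,L] → ℝ be continuously differentiable functions such that ∫₀ᴸ (α'(u(x)) u'(x) − α'(v(x)) v'(x)) (u'(x) − v'(x)) dx ≥ α'_c ∫₀ᴸ (u'(x) − v'(x))² dx. Then ∫₀ᴸ (α'(u(x)) u'(x) − α'(v(x)) v'(x)) (u'(x) − v'(x))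 dx + (β_L(u(L)) − β_L(v(L))) (u(L) − v(L)) + (β₀(u(0)) − β₀(v(0))) (u(0) − v(0)) ≥ −c_u ∫₀ᴸ (u(x) − v(x))² dx. -/
/-!
With `w = u - v`, each boundary term is at least `-β'max w(x)²` by the mean value theorem, and
the embedding gives `w(x)² ≤ c_c² (‖w‖_H² + ‖w'‖_H²)`; the two boundary points thus cost at most
`c_u (‖w‖_H² + ‖w'‖_H²)`, and the part `c_u ‖w'‖_H²` is absorbed by the principal term since
`α'_c ≥ c_u`.
-/

open Set

lemma vNorm_sq {L : ℝ} (hL : 0 ≤ L) (w : ℝ → ℝ) :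
    vNorm L w ^ 2 = (∫ x in (0:ℝ)..L, w x ^ 2) + ∫ x in (0:ℝ)..L, deriv w x ^ 2 :=
  Real.sq_sqrt <| add_nonneg
    (intervalIntegral.integral_nonneg hL fun _ _ => sq_nonneg _)
    (intervalIntegral.integral_nonneg hL fun _ _ => sq_nonneg _)

lemma sq_le_of_abs_le_mul_vNorm {L c : ℝ} (hL : 0 ≤ L) {w : ℝ → ℝ} {x : ℝ}
    (h : |w x| ≤ c * vNorm L w) :
    w x ^ 2 ≤ c ^ 2 * ((∫ x in (0:ℝ)..L, w x ^ 2) + ∫ x in (0:ℝ)..L, deriv w x ^ 2) := by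
  rw [← vNorm_sq hL, ← mul_pow, ← sq_abs]
  exact pow_le_pow_left₀ (abs_nonneg _) h 2

lemma abs_sub_le_of_abs_deriv_le {f : ℝ → ℝ} (hf : Differentiable ℝ f) {C : ℝ}
    (hC : ∀ s, |deriv f s| ≤ C) (a b : ℝ) : |f a - f b| ≤ C * |a - b| :=
  convex_univ.norm_image_sub_le_of_norm_deriv_le (fun x _ => hf x) (fun x _ => hC x)
    (mem_univ b) (mem_univ a)

lemma neg_mul_sq_le_sub_mul_sub_of_abs_deriv_le {f : ℝ → ℝ} (hf : Differentiable ℝ f) {C : ℝ}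
    (hC : ∀ s, |deriv f s| ≤ C) (a b : ℝ) : -(C * (a - b) ^ 2) ≤ (f a - f b) * (a - b) := by
  calc -(C * (a - b) ^ 2) = -(C * |a - b| * |a - b|) := by rw [mul_assoc, abs_mul_abs_self, sq]
    _ ≤ -(|f a - f b| * |a - b|) := by
        gcongr
        exact abs_sub_le_of_abs_deriv_le hf hC a b
    _ = -|(f a - f b) * (a - b)| := by rw [abs_mul]
    _ ≤ (f a - f b) * (a - b) := neg_abs_le _

theorem stmt_9_general (L β'max c_c : ℝ) (hL : 0 < L)
    (hemb : ∀ w : ℝ → ℝ, ContDiff ℝ 1 w → ∀ x ∈ Icc (0:ℝ) L, |w x| ≤ c_c * vNorm L w)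
    (β₀ βL : ℝ → ℝ) (hβ₀d : Differentiable ℝ β₀) (hβLd : Differentiable ℝ βL)
    (hβ₀' : ∀ s : ℝ, |deriv β₀ s| ≤ β'max) (hβL' : ∀ s : ℝ, |deriv βL s| ≤ β'max)
    (α' : ℝ → ℝ) (α'c : ℝ) (hαc : 2 * β'max * c_c ^ 2 ≤ α'c)
    (u v : ℝ → ℝ) (hu : ContDiff ℝ 1 u) (hv : ContDiff ℝ 1 v)
    (hmon : α'c * (∫ x in (0:ℝ)..L, (deriv u x - deriv v x) ^ 2) ≤
      ∫ x in (0:ℝ)..L,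
        (α' (u x) * deriv u x - α' (v x) * deriv v x) * (deriv u x - deriv v x)) :
    -(2 * β'max * c_c ^ 2) * (∫ x in (0:ℝ)..L, (u x - v x) ^ 2) ≤
      (∫ x in (0:ℝ)..L,
          (α' (u x) * deriv u x - α' (v x) * deriv v x) * (deriv u x - deriv v x)) +
        (βL (u L) - βL (v L)) * (u L - v L) + (β₀ (u 0) - β₀ (v 0)) * (u 0 - v 0) := by
  set I := ∫ x in (0:ℝ)..L, (u x - v x) ^ 2
  set J := ∫ x in (0:ℝ)..L, (deriv u x - deriv v x) ^ 2
  have hJ : 0 ≤ J := intervalIntegral.integral_nonneg hL.le fun _ _ => sq_nonneg _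
  have hβ : 0 ≤ β'max := (abs_nonneg _).trans (hβ₀' 0)
  have hderiv : deriv (fun x => u x - v x) = fun x => deriv u x - deriv v x :=
    funext fun x => deriv_fun_sub (hu.differentiable one_ne_zero x)
      (hv.differentiable one_ne_zero x)
  have hpoint : ∀ x ∈ Icc 0 L, (u x - v x) ^ 2 ≤ c_c ^ 2 * (I + J) := fun x hx => by
    simpa only [hderiv] using sq_le_of_abs_le_mul_vNorm (w := fun x => u x - v x) hL.le
      (hemb _ (hu.sub hv) x hx)
  have hbdryL := neg_mul_sq_le_sub_mul_sub_of_abs_deriv_le hβLd hβL' (u L) (v L)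
  have hbdry₀ := neg_mul_sq_le_sub_mul_sub_of_abs_deriv_le hβ₀d hβ₀' (u 0) (v 0)
  have hL' := mul_le_mul_of_nonneg_left (hpoint L ⟨hL.le, le_rfl⟩) hβ
  have h₀' := mul_le_mul_of_nonneg_left (hpoint 0 ⟨le_rfl, hL.le⟩) hβ
  have hJ' := mul_le_mul_of_nonneg_right hαc hJ
  linarith

/-- Semimonotonicity `⟨A(u) − A(v), u − v⟩ ≥ −c_u ‖u − v‖_H²` with `c_u = 2 β'_max c_c²`,
under the strengthened monotonicity assumption on the principal part. -/
theorem stmt_9 (L β'max c_c : ℝ) (hL : 0 < L) (hβ'max : 0 < β'max) (hcc : 0 < c_c)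
    (hemb : ∀ w : ℝ → ℝ, ContDiff ℝ 1 w → ∀ x ∈ Icc (0:ℝ) L, |w x| ≤ c_c * vNorm L w)
    (β₀ βL : ℝ → ℝ) (hβ₀d : Differentiable ℝ β₀) (hβLd : Differentiable ℝ βL)
    (hβ₀' : ∀ s : ℝ, |deriv β₀ s| ≤ β'max) (hβL' : ∀ s : ℝ, |deriv βL s| ≤ β'max)
    (α' : ℝ → ℝ) (α'c : ℝ) (hαc : 2 * β'max * c_c ^ 2 ≤ α'c)
    (u v : ℝ → ℝ) (hu : ContDiff ℝ 1 u) (hv : ContDiff ℝ 1 v)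
    (hmon : α'c * (∫ x in (0:ℝ)..L, (deriv u x - deriv v x) ^ 2) ≤
      ∫ x in (0:ℝ)..L,
        (α' (u x) * deriv u x - α' (v x) * deriv v x) * (deriv u x - deriv v x)) :
    -(2 * β'max * c_c ^ 2) * (∫ x in (0:ℝ)..L, (u x - v x) ^ 2) ≤
      (∫ x in (0:ℝ)..L,
          (α' (u x) * deriv u x - α' (v x) * deriv v x) * (deriv u x - deriv v x)) +
        (βL (u L) - βL (v L)) * (u L - v L) + (β₀ (u 0) - β₀ (v 0)) * (u 0 - v 0) :=
  stmt_9_general L β'max c_c hL hemb β₀ βL hβ₀d hβLd hβ₀' hβL' α' α'c hαc u v hu hv hmon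
end

section
/- Let a < b be real numbers, let f : [a,b] → ℝ be continuously differentiable, and let ε > 0. Then there exist an integer n ≥ 2 and a function p : [a,b] → ℝ such that, with the equidistant partition points x_j := a + (j−1)(b−a)/(n−1) for j = 1, …, n: (1) p is continuously differentiable on [a,b]; (2) on each subinterval [x_j, x_{j+1}] (j = 1, …, n−1) p coincides with a polynomial of degree at most 3; (3) p(x_j) = f(x_j) for all j = 1, …, n; (4) for each j = 1, …, n−1 and all x ∈ [x_j, x_{j+1}], min(f(x_j), f(x_{j+1})) ≤ p(x) ≤ max(f(x_j), f(x_{j+1})); and (5) max_{x ∈ [a,b]} |p(x) − f(x)| < ε. -/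
/-!
Use the cubic Hermite interpolant with all nodal slopes set to zero. On the cell
`[a + k h, a + (k + 1) h]` it is `y k + (y (k + 1) - y k) * φ ((x - a - k h) / h)`, where the
smoothstep `φ t = 3 t² - 2 t³` increases from `0` to `1` with `φ' = 0` at both ends. Extending `φ`
by `0` on `(-∞, 0]` and by `1` on `[1, ∞)` gives a `C¹` function, and the interpolant becomes the
single telescoping sum `y 0 + ∑ i, (y (i + 1) - y i) * φ ((x - a - i h) / h)`, so it is `C¹`
everywhere. On each cell its value lies between the two nodal values, so it differs from `f x` by
at most `|f (x_{k+1}) - f (x_k)| + |f x_k - f x|`, which uniform continuity makes small once the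
mesh `h` is small.
-/

open Set intervalIntegral

noncomputable def smoothstepDeriv (s : ℝ) : ℝ := 6 * max (s * (1 - s)) 0

-- Defined through its derivative so that being `C¹` across `0` and `1` is automatic.
noncomputable def smoothstep (t : ℝ) : ℝ := ∫ s in (0 : ℝ)..t, smoothstepDeriv s

theorem continuous_smoothstepDeriv : Continuous smoothstepDeriv := by
  unfold smoothstepDeriv; fun_prop

theorem smoothstepDeriv_nonneg (s : ℝ) : 0 ≤ smoothstepDeriv s := by
  unfold smoothstepDeriv; positivity

theorem smoothstepDeriv_eq_zero {s : ℝ} (hs : s ∉ Ioo 0 1) : smoothstepDeriv s = 0 := by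
  rw [mem_Ioo, not_and_or, not_lt, not_lt] at hs
  have : s * (1 - s) ≤ 0 := by
    rcases hs with hs | hs
    · exact mul_nonpos_of_nonpos_of_nonneg hs (by linarith)
    · exact mul_nonpos_of_nonneg_of_nonpos (by linarith) (by linarith)
  simp [smoothstepDeriv, max_eq_right this]

theorem smoothstepDeriv_of_mem_Icc {s : ℝ} (hs : s ∈ Icc 0 1) :
    smoothstepDeriv s = 6 * s - 6 * s ^ 2 := by
  rw [smoothstepDeriv, max_eq_left (mul_nonneg hs.1 (by linarith [hs.2]))]
  ring

theorem hasDerivAt_smoothstep (t : ℝ) : HasDerivAt smoothstep (smoothstepDeriv t) t :=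
  (continuous_smoothstepDeriv.integral_hasStrictDerivAt 0 t).hasDerivAt

theorem contDiff_smoothstep : ContDiff ℝ 1 smoothstep := by
  rw [contDiff_one_iff_deriv, funext fun t => (hasDerivAt_smoothstep t).deriv]
  exact ⟨fun t => (hasDerivAt_smoothstep t).differentiableAt, continuous_smoothstepDeriv⟩

theorem monotone_smoothstep : Monotone smoothstep :=
  monotone_of_deriv_nonneg (fun t => (hasDerivAt_smoothstep t).differentiableAt) fun t => by
    rw [(hasDerivAt_smoothstep t).deriv]; exact smoothstepDeriv_nonneg t

theorem smoothstep_of_nonpos {t : ℝ} (ht : t ≤ 0) : smoothstep t = 0 := by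
  have : EqOn smoothstepDeriv 0 (uIcc 0 t) := fun s hs => by
    rw [uIcc_of_ge ht] at hs
    exact smoothstepDeriv_eq_zero fun h => (h.1.trans_le hs.2).false
  rw [smoothstep, integral_congr this, Pi.zero_def, integral_zero]

theorem smoothstep_of_mem_Icc {t : ℝ} (ht : t ∈ Icc 0 1) :
    smoothstep t = 3 * t ^ 2 - 2 * t ^ 3 := by
  have hderiv (s : ℝ) :
      HasDerivAt (fun s : ℝ => 3 * s ^ 2 - 2 * s ^ 3) (6 * s - 6 * s ^ 2) s :=
    (((hasDerivAt_pow 2 s).const_mul 3).sub ((hasDerivAt_pow 3 s).const_mul 2)).congr_deriv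
      (by norm_num; ring)
  have : EqOn smoothstepDeriv (fun s => 6 * s - 6 * s ^ 2) (uIcc 0 t) := fun s hs => by
    rw [uIcc_of_le ht.1] at hs
    exact smoothstepDeriv_of_mem_Icc ⟨hs.1, hs.2.trans ht.2⟩
  rw [smoothstep, integral_congr this, integral_eq_sub_of_hasDerivAt (fun s _ => hderiv s)
    ((by fun_prop : Continuous fun s : ℝ => 6 * s - 6 * s ^ 2).intervalIntegrable _ _)]
  ring

theorem smoothstep_of_one_le {t : ℝ} (ht : 1 ≤ t) : smoothstep t = 1 := by
  have : EqOn smoothstepDeriv 0 (uIcc 1 t) := fun s hs => by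
    rw [uIcc_of_le ht] at hs
    exact smoothstepDeriv_eq_zero fun h => (h.2.trans_le hs.1).false
  have hsub := integral_interval_sub_left
    (continuous_smoothstepDeriv.intervalIntegrable (μ := MeasureTheory.volume) 0 t)
    (continuous_smoothstepDeriv.intervalIntegrable 0 1)
  rw [integral_congr this, Pi.zero_def, integral_zero, sub_eq_zero] at hsub
  rw [smoothstep, hsub, ← smoothstep, smoothstep_of_mem_Icc ⟨zero_le_one, le_rfl⟩]
  norm_num

theorem smoothstep_mem_Icc (t : ℝ) : smoothstep t ∈ Icc 0 1 :=
  ⟨(smoothstep_of_nonpos (min_le_right t 0)).symm.trans_le (monotone_smoothstep (min_le_left t 0)),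
    (monotone_smoothstep (le_max_left t 1)).trans_eq (smoothstep_of_one_le (le_max_right t 1))⟩

noncomputable def flatHermite (a h : ℝ) (y : ℕ → ℝ) (N : ℕ) (x : ℝ) : ℝ :=
  y 0 + ∑ i ∈ Finset.range N, (y (i + 1) - y i) * smoothstep ((x - (a + i * h)) / h)

theorem contDiff_flatHermite (a h : ℝ) (y : ℕ → ℝ) (N : ℕ) :
    ContDiff ℝ 1 (flatHermite a h y N) :=
  contDiff_const.add <| ContDiff.sum fun _ _ =>
    contDiff_const.mul <| contDiff_smoothstep.comp ((contDiff_id.sub contDiff_const).div_const h)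

section FlatHermite

variable {a h : ℝ} {y : ℕ → ℝ} {N k : ℕ}

theorem flatHermite_eq_of_mem_Icc (hh : 0 < h) (hk : k < N) {x : ℝ}
    (hx : x ∈ Icc (a + k * h) (a + (k + 1) * h)) :
    flatHermite a h y N x = y k + (y (k + 1) - y k) * smoothstep ((x - (a + k * h)) / h) := by
  have below : ∀ i ∈ Finset.range k,
      (y (i + 1) - y i) * smoothstep ((x - (a + i * h)) / h) = y (i + 1) - y i := by
    intro i hi
    have : (i : ℝ) + 1 ≤ k := by exact_mod_cast Finset.mem_range.1 hi
    rw [smoothstep_of_one_le, mul_one]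
    rw [le_div_iff₀ hh]
    nlinarith [hx.1]
  have above : ∀ i ∈ Finset.Ico (k + 1) N,
      (y (i + 1) - y i) * smoothstep ((x - (a + i * h)) / h) = 0 := by
    intro i hi
    have : (k : ℝ) + 1 ≤ i := by exact_mod_cast (Finset.mem_Ico.1 hi).1
    rw [smoothstep_of_nonpos, mul_zero]
    exact div_nonpos_of_nonpos_of_nonneg (by nlinarith [hx.2]) hh.le
  rw [flatHermite, ← Finset.sum_range_add_sum_Ico _ hk, Finset.sum_range_succ,
    Finset.sum_congr rfl below, Finset.sum_range_sub, Finset.sum_eq_zero above]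
  ring

theorem flatHermite_mem_uIcc (hh : 0 < h) (hk : k < N) {x : ℝ}
    (hx : x ∈ Icc (a + k * h) (a + (k + 1) * h)) :
    flatHermite a h y N x ∈ uIcc (y k) (y (k + 1)) := by
  rw [flatHermite_eq_of_mem_Icc hh hk hx, mul_comm]
  exact (convex_uIcc _ _).add_smul_sub_mem left_mem_uIcc right_mem_uIcc (smoothstep_mem_Icc _)

theorem exists_cubic_eq_flatHermite (hh : 0 < h) (hk : k < N) :
    ∃ q : Polynomial ℝ, q.degree ≤ 3 ∧
      ∀ x ∈ Icc (a + k * h) (a + (k + 1) * h), flatHermite a h y N x = q.eval x := by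
  open Polynomial in
  let u : ℝ[X] := C h⁻¹ * (X - C (a + k * h))
  refine ⟨C (y k) + C (y (k + 1) - y k) * (3 * u ^ 2 - 2 * u ^ 3),
    by simp only [u]; compute_degree, ?_⟩
  intro x hx
  have hu : (x - (a + k * h)) / h ∈ Icc 0 1 := by
    rw [mem_Icc, le_div_iff₀ hh, div_le_iff₀ hh]
    constructor <;> linarith [hx.1, hx.2]
  rw [flatHermite_eq_of_mem_Icc hh hk hx, smoothstep_of_mem_Icc hu]
  simp [u, div_eq_inv_mul]

theorem flatHermite_node (hh : 0 < h) (hk : k ≤ N) : flatHermite a h y N (a + k * h) = y k := by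
  rcases hk.lt_or_eq with hk | rfl
  · rw [flatHermite_eq_of_mem_Icc hh hk ⟨le_rfl, by linarith⟩]
    simp [smoothstep_of_nonpos]
  · cases k with
    | zero => simp [flatHermite]
    | succ k =>
      rw [flatHermite_eq_of_mem_Icc (k := k) hh (Nat.lt_succ_self k)
          ⟨by push_cast; linarith, by push_cast; rfl⟩,
        show (a + ((k + 1 : ℕ) : ℝ) * h - (a + k * h)) / h = 1 by push_cast; field_simp; ring,
        smoothstep_of_one_le le_rfl]
      ring

theorem exists_lt_mem_Icc_add_mul {x : ℝ} (hN : 0 < N) (hx : x ∈ Icc a (a + N * h)) :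
    ∃ k < N, x ∈ Icc (a + k * h) (a + (k + 1) * h) := by
  induction N with
  | zero => exact absurd hN (lt_irrefl 0)
  | succ N ih =>
    rcases Nat.eq_zero_or_pos N with rfl | hN
    · exact ⟨0, Nat.one_pos, by simpa using hx⟩
    by_cases hxN : x ≤ a + N * h
    · obtain ⟨k, hk, hxk⟩ := ih hN ⟨hx.1, hxN⟩
      exact ⟨k, hk.trans (Nat.lt_succ_self N), hxk⟩
    · exact ⟨N, Nat.lt_succ_self N, (not_le.1 hxN).le, by simpa using hx.2⟩

end FlatHermite

theorem abs_flatHermite_sub_lt {a h ε : ℝ} {N : ℕ} {f : ℝ → ℝ} (hh : 0 < h) (hN : 0 < N)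
    (hf : ∀ x ∈ Icc a (a + N * h), ∀ x' ∈ Icc a (a + N * h), |x - x'| ≤ h → |f x - f x'| < ε / 2)
    {x : ℝ} (hx : x ∈ Icc a (a + N * h)) :
    |flatHermite a h (fun i => f (a + i * h)) N x - f x| < ε := by
  obtain ⟨k, hk, hxk⟩ := exists_lt_mem_Icc_add_mul hN hx
  have hkN : (k : ℝ) + 1 ≤ N := by exact_mod_cast hk
  have hk_mem : a + k * h ∈ Icc a (a + N * h) := ⟨by nlinarith, by nlinarith⟩
  have hk_succ_mem : a + ((k + 1 : ℕ) : ℝ) * h ∈ Icc a (a + N * h) := by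
    push_cast; exact ⟨by nlinarith, by nlinarith⟩
  have hjump := hf _ hk_succ_mem _ hk_mem (by push_cast; rw [abs_of_pos (by linarith)]; linarith)
  have hnear := hf _ hk_mem _ hx <| by
    rw [abs_sub_comm, abs_of_nonneg (by linarith [hxk.1])]; linarith [hxk.2]
  calc |flatHermite a h (fun i => f (a + i * h)) N x - f x|
      ≤ |flatHermite a h (fun i => f (a + i * h)) N x - f (a + k * h)| + |f (a + k * h) - f x| :=
        abs_sub_le _ _ _
    _ ≤ |f (a + ((k + 1 : ℕ) : ℝ) * h) - f (a + k * h)| + |f (a + k * h) - f x| :=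
        add_le_add (abs_sub_left_of_mem_uIcc
          (flatHermite_mem_uIcc (y := fun i => f (a + i * h)) hh hk hxk)) le_rfl
    _ < ε := by linarith

/-- Approximation property of shape-preserving piecewise cubic Hermite (PCHIP) interpolation:
every `C¹` function on `[a,b]` can be uniformly approximated within `ε` by a `C¹` piecewise
cubic interpolant on a sufficiently fine equidistant partition, which interpolates the function
values at the partition points and, on each subinterval, stays between the two interpolated
endpoint values. -/
theorem stmt_10 (a b : ℝ) (hab : a < b) (f : ℝ → ℝ)
    (hf : ContDiffOn ℝ 1 f (Icc a b)) (ε : ℝ) (hε : 0 < ε) :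
    ∃ (n : ℕ) (p : ℝ → ℝ) (node : ℕ → ℝ),
      2 ≤ n ∧
      (∀ j : ℕ, node j = a + ((j : ℝ) - 1) * (b - a) / ((n : ℝ) - 1)) ∧
      ContDiffOn ℝ 1 p (Icc a b) ∧
      (∀ j : ℕ, 1 ≤ j → j + 1 ≤ n → ∃ q : Polynomial ℝ, q.degree ≤ 3 ∧
        ∀ x ∈ Icc (node j) (node (j + 1)), p x = q.eval x) ∧
      (∀ j : ℕ, 1 ≤ j → j ≤ n → p (node j) = f (node j)) ∧
      (∀ j : ℕ, 1 ≤ j → j + 1 ≤ n → ∀ x ∈ Icc (node j) (node (j + 1)),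
        min (f (node j)) (f (node (j + 1))) ≤ p x ∧
          p x ≤ max (f (node j)) (f (node (j + 1)))) ∧
      (∀ x ∈ Icc a b, |p x - f x| < ε) := by
  obtain ⟨δ, hδ, hfδ⟩ := Metric.uniformContinuousOn_iff.mp
    (isCompact_Icc.uniformContinuousOn_of_continuous hf.continuousOn) (ε / 2) (half_pos hε)
  obtain ⟨N, hN⟩ := exists_nat_gt ((b - a) / δ)
  have hN0 : 0 < N := by exact_mod_cast (div_pos (sub_pos.2 hab) hδ).trans hN
  set h := (b - a) / N
  have hh : 0 < h := div_pos (sub_pos.2 hab) (by exact_mod_cast hN0)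
  have hhδ : h < δ := by rwa [div_lt_iff₀ (by exact_mod_cast hN0), mul_comm, ← div_lt_iff₀ hδ]
  have hb : a + N * h = b := by simp only [h]; field_simp; ring
  have node_succ (i : ℕ) :
      a + (((i + 1 : ℕ) : ℝ) - 1) * (b - a) / (((N + 1 : ℕ) : ℝ) - 1) = a + i * h := by
    push_cast; ring
  refine ⟨N + 1, flatHermite a h (fun i => f (a + i * h)) N,
    fun j => a + ((j : ℝ) - 1) * (b - a) / (((N + 1 : ℕ) : ℝ) - 1), by omega, fun j => rfl,
    (contDiff_flatHermite ..).contDiffOn, ?_, ?_, ?_, ?_⟩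
  · intro j hj hjn
    obtain ⟨i, rfl⟩ := Nat.exists_eq_add_of_le' hj
    simp only [node_succ]
    rw [Nat.cast_succ]
    exact exists_cubic_eq_flatHermite hh (by omega)
  · intro j hj hjn
    obtain ⟨i, rfl⟩ := Nat.exists_eq_add_of_le' hj
    simp only [node_succ]
    exact flatHermite_node hh (by omega : i ≤ N)
  · intro j hj hjn x hx
    obtain ⟨i, rfl⟩ := Nat.exists_eq_add_of_le' hj
    simp only [node_succ] at hx ⊢
    rw [Nat.cast_succ] at hx
    exact flatHermite_mem_uIcc (y := fun i => f (a + i * h)) hh (by omega) hx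
  · rw [← hb]
    exact fun x => abs_flatHermite_sub_lt hh hN0 fun x hx x' hx' hxx' =>
      hfδ x (hb ▸ hx) x' (hb ▸ hx') (hxx'.trans_lt hhδ)
end

section
/- Let x₁ < x₂ be real numbers and set h := x₂ − x₁. Let f₁ ≤ f₂ be real numbers, set Δ := (f₂ − f₁)/h, and let d₁, d₂ be real numbers with 0 ≤ d₁ ≤ 3Δ and 0 ≤ d₂ ≤ 3Δ. Define φ(s) := 3s² − 2s³ and ψ(s) := s³ − s², and define the cubic Hermite polynomial p(x) := f₁ φ((x₂ − x)/h) + f₂ φ((x − x₁)/h) − h d₁ ψ((x₂ − x)/h) + h d₂ ψ((x − x₁)/h). Then p is monotone nondecreasing on [x₁, x₂]; in particular p(x₁) = f₁, p(x₂) = f₂, and f₁ ≤ p(x) ≤ f₂ for all x ∈ [x₁, x₂]. -/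
/-!
After the affine change of variables `t = (x - x₁)/h`, the interpolant becomes the cubic Hermite
polynomial `H` on `[0, 1]` with endpoint values `f₁, f₂` and endpoint slopes `m₁ = h d₁`,
`m₂ = h d₂`. Its derivative `6 A t (1 - t) + m₁ (1 - t)(1 - 3t) + m₂ t (3t - 2)`, `A = f₂ - f₁`,
is affine in `(m₁, m₂)`, so on the box `[0, 3A]²` it is a bilinear interpolation of its values
at the four corners, namely `6 A t (1 - t)`, `3 A (1 - t)²`, `3 A t²` and `3 A (2t - 1)²`,
all nonnegative.
-/

open Set

lemma hermite_slope_nonneg {A m₁ m₂ t : ℝ} (hm₁ : 0 ≤ m₁) (hm₁A : m₁ ≤ 3 * A)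
    (hm₂ : 0 ≤ m₂) (hm₂A : m₂ ≤ 3 * A) (ht₀ : 0 ≤ t) (ht₁ : t ≤ 1) :
    0 ≤ 6 * A * t * (1 - t) + m₁ * (1 - t) * (1 - 3 * t) + m₂ * t * (3 * t - 2) := by
  rcases (show 0 ≤ A by linarith).eq_or_lt with hA | hA
  · obtain rfl : m₁ = 0 := by linarith
    obtain rfl : m₂ = 0 := by linarith
    simp [← hA]
  · have corners : 3 * A * (6 * A * t * (1 - t) + m₁ * (1 - t) * (1 - 3 * t) + m₂ * t * (3 * t - 2))
        = (3 * A - m₁) * (3 * A - m₂) * (2 * t * (1 - t)) + m₁ * (3 * A - m₂) * (1 - t) ^ 2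
          + (3 * A - m₁) * m₂ * t ^ 2 + m₁ * m₂ * (2 * t - 1) ^ 2 := by ring
    refine nonneg_of_mul_nonneg_right (a := 3 * A) ?_ (by positivity)
    have hA₁ : 0 ≤ 3 * A - m₁ := by linarith
    have hA₂ : 0 ≤ 3 * A - m₂ := by linarith
    have ht : 0 ≤ 1 - t := by linarith
    rw [corners]
    positivity

def unitHermite (f₁ f₂ m₁ m₂ t : ℝ) : ℝ :=
  f₁ * (3 * (1 - t) ^ 2 - 2 * (1 - t) ^ 3) + f₂ * (3 * t ^ 2 - 2 * t ^ 3)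
    - m₁ * ((1 - t) ^ 3 - (1 - t) ^ 2) + m₂ * (t ^ 3 - t ^ 2)

@[simp] lemma unitHermite_zero (f₁ f₂ m₁ m₂ : ℝ) : unitHermite f₁ f₂ m₁ m₂ 0 = f₁ := by
  norm_num [unitHermite]

@[simp] lemma unitHermite_one (f₁ f₂ m₁ m₂ : ℝ) : unitHermite f₁ f₂ m₁ m₂ 1 = f₂ := by
  norm_num [unitHermite]

lemma hasDerivAt_unitHermite (f₁ f₂ m₁ m₂ t : ℝ) :
    HasDerivAt (unitHermite f₁ f₂ m₁ m₂)
      (6 * (f₂ - f₁) * t * (1 - t) + m₁ * (1 - t) * (1 - 3 * t) + m₂ * t * (3 * t - 2)) t := by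
  have hs : HasDerivAt (fun t : ℝ => 1 - t) (-1) t := by
    simpa using (hasDerivAt_id t).const_sub 1
  have ht := hasDerivAt_id t
  have H := (((((hs.pow 2).const_mul 3).sub ((hs.pow 3).const_mul 2)).const_mul f₁).add
      ((((ht.pow 2).const_mul 3).sub ((ht.pow 3).const_mul 2)).const_mul f₂)).sub
      (((hs.pow 3).sub (hs.pow 2)).const_mul m₁) |>.add
      (((ht.pow 3).sub (ht.pow 2)).const_mul m₂)
  refine H.congr_deriv ?_
  simp only [id]
  ring

lemma monotoneOn_unitHermite {f₁ f₂ m₁ m₂ : ℝ} (hm₁ : 0 ≤ m₁) (hm₁f : m₁ ≤ 3 * (f₂ - f₁))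
    (hm₂ : 0 ≤ m₂) (hm₂f : m₂ ≤ 3 * (f₂ - f₁)) :
    MonotoneOn (unitHermite f₁ f₂ m₁ m₂) (Icc 0 1) := by
  refine monotoneOn_of_hasDerivWithinAt_nonneg (convex_Icc 0 1)
    (fun t _ => (hasDerivAt_unitHermite f₁ f₂ m₁ m₂ t).continuousAt.continuousWithinAt)
    (fun t _ => (hasDerivAt_unitHermite f₁ f₂ m₁ m₂ t).hasDerivWithinAt) ?_
  rw [interior_Icc]
  rintro t ⟨ht₀, ht₁⟩
  simpa [mul_assoc] using hermite_slope_nonneg hm₁ hm₁f hm₂ hm₂f ht₀.le ht₁.le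

theorem stmt_11_general (x₁ x₂ f₁ f₂ d₁ d₂ : ℝ) (hx : x₁ < x₂)
    (hd₁0 : 0 ≤ d₁) (hd₁ : d₁ ≤ 3 * ((f₂ - f₁) / (x₂ - x₁)))
    (hd₂0 : 0 ≤ d₂) (hd₂ : d₂ ≤ 3 * ((f₂ - f₁) / (x₂ - x₁)))
    (φ ψ p : ℝ → ℝ)
    (hφ : ∀ s : ℝ, φ s = 3 * s ^ 2 - 2 * s ^ 3)
    (hψ : ∀ s : ℝ, ψ s = s ^ 3 - s ^ 2)
    (hp : ∀ x : ℝ, p x =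
      f₁ * φ ((x₂ - x) / (x₂ - x₁)) + f₂ * φ ((x - x₁) / (x₂ - x₁)) -
        (x₂ - x₁) * d₁ * ψ ((x₂ - x) / (x₂ - x₁)) +
        (x₂ - x₁) * d₂ * ψ ((x - x₁) / (x₂ - x₁))) :
    MonotoneOn p (Icc x₁ x₂) ∧ p x₁ = f₁ ∧ p x₂ = f₂ ∧
      ∀ x ∈ Icc x₁ x₂, f₁ ≤ p x ∧ p x ≤ f₂ := by
  have hh : 0 < x₂ - x₁ := sub_pos.mpr hx
  have hslope {d : ℝ} (hd : d ≤ 3 * ((f₂ - f₁) / (x₂ - x₁))) : (x₂ - x₁) * d ≤ 3 * (f₂ - f₁) := by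
    rw [← mul_div_assoc, le_div_iff₀ hh] at hd
    linarith
  have hpH : ∀ x, p x = unitHermite f₁ f₂ ((x₂ - x₁) * d₁) ((x₂ - x₁) * d₂) ((x - x₁) / (x₂ - x₁)) := by
    intro x
    have hs : (x₂ - x) / (x₂ - x₁) = 1 - (x - x₁) / (x₂ - x₁) := by field_simp; ring
    rw [hp, hφ, hφ, hψ, hψ, hs, unitHermite]
  have hrescale_mono : Monotone fun x => (x - x₁) / (x₂ - x₁) := fun a b hab => by
    simp only
    gcongr
  have hrescale_maps : MapsTo (fun x => (x - x₁) / (x₂ - x₁)) (Icc x₁ x₂) (Icc 0 1) := by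
    rintro x ⟨hx₁, hx₂⟩
    exact ⟨div_nonneg (by linarith) hh.le, (div_le_one hh).mpr (by linarith)⟩
  have hmono : MonotoneOn p (Icc x₁ x₂) :=
    ((monotoneOn_unitHermite (by positivity) (hslope hd₁) (by positivity) (hslope hd₂)).comp
      (hrescale_mono.monotoneOn _) hrescale_maps).congr fun x _ => (hpH x).symm
  have hp₁ : p x₁ = f₁ := by simp [hpH]
  have hp₂ : p x₂ = f₂ := by simp [hpH, hh.ne']
  refine ⟨hmono, hp₁, hp₂, fun x hx' => ⟨?_, ?_⟩⟩
  · exact hp₁ ▸ hmono (left_mem_Icc.mpr hx.le) hx' hx'.1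
  · exact hp₂ ▸ hmono hx' (right_mem_Icc.mpr hx.le) hx'.2

/-- Fritsch–Carlson monotonicity: if `f₁ ≤ f₂` and the endpoint slopes satisfy
`0 ≤ d₁, d₂ ≤ 3Δ` with `Δ = (f₂ − f₁)/(x₂ − x₁)`, then the cubic Hermite interpolant
is monotone nondecreasing on `[x₁,x₂]`; in particular it interpolates the endpoint values
and stays between them. -/
theorem stmt_11 (x₁ x₂ f₁ f₂ d₁ d₂ : ℝ) (hx : x₁ < x₂) (hf : f₁ ≤ f₂)
    (hd₁0 : 0 ≤ d₁) (hd₁ : d₁ ≤ 3 * ((f₂ - f₁) / (x₂ - x₁)))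
    (hd₂0 : 0 ≤ d₂) (hd₂ : d₂ ≤ 3 * ((f₂ - f₁) / (x₂ - x₁)))
    (φ ψ p : ℝ → ℝ)
    (hφ : ∀ s : ℝ, φ s = 3 * s ^ 2 - 2 * s ^ 3)
    (hψ : ∀ s : ℝ, ψ s = s ^ 3 - s ^ 2)
    (hp : ∀ x : ℝ, p x =
      f₁ * φ ((x₂ - x) / (x₂ - x₁)) + f₂ * φ ((x - x₁) / (x₂ - x₁)) -
        (x₂ - x₁) * d₁ * ψ ((x₂ - x) / (x₂ - x₁)) +
        (x₂ - x₁) * d₂ * ψ ((x - x₁) / (x₂ - x₁))) :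
    MonotoneOn p (Icc x₁ x₂) ∧ p x₁ = f₁ ∧ p x₂ = f₂ ∧
      ∀ x ∈ Icc x₁ x₂, f₁ ≤ p x ∧ p x ≤ f₂ :=
  stmt_11_general x₁ x₂ f₁ f₂ d₁ d₂ hx hd₁0 hd₁ hd₂0 hd₂ φ ψ p hφ hψ hp
end

section
/- Let C, k : ℝ → ℝ be continuous with C(θ) > 0 for all θ ∈ ℝ, fix θ̲ ∈ ℝ, define Ĉ(θ) := ∫_{θ̲}^{θ} C(ξ) dξ with range J := Ĉ(ℝ) and inverse Ĉ⁻¹ : J → ℝ, and define α : J → ℝ by α(u) := ∫_{θ̲}^{Ĉ⁻¹(u)} k(ξ) dξ. Let θ : D → ℝ be a function on an open set D ⊆ ℝ², let (t₀,x₀) ∈ D, and assume: the partial derivative ∂_t θ(t₀,x₀) exists; the function x ↦ θ(t₀,x) is differentiable on a neighborhood of x₀; and the function x ↦ k(θ(t₀,x)) ∂_x θ(t₀,x) is differentiable at x₀. Define u(t,x) := Ĉ(θ(t,x)) on D. Then: (1) ∂_t u(t₀,x₀) = C(θ(t₀,x₀)) ∂_t θ(t₀,x₀); (2) ∂_x u(t₀,x)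 = C(θ(t₀,x)) ∂_x θ(t₀,x) for x near x₀; (3) α'(u(t₀,x)) ∂_x u(t₀,x) = k(θ(t₀,x)) ∂_x θ(t₀,x) for x near x₀, so that x ↦ α'(u(t₀,x)) ∂_x u(t₀,x) is differentiable at x₀; and (4) the equation C(θ) ∂_t θ = ∂_x ( k(θ) ∂_x θ ) holds at (t₀,x₀) if and only if the equation ∂_t u = ∂_x ( α'(u) ∂_x u ) holds at (t₀,x₀). -/
open Filter Topology

/-! Both formulations are related by the chain rule through `u = Ĉ(θ)`. The fundamental theorem
of calculus gives `Ĉ' = C > 0`, so by the inverse function theorem `Ĉ` maps neighbourhoods onto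
neighbourhoods and any left inverse of `Ĉ` is differentiable with derivative `1 / C`; hence
`α' (Ĉ θ) = k θ / C θ` and the enthalpy flux `α'(u) u_x` coincides with the temperature flux
`k(θ) θ_x` near `x₀`. Equal fluxes have equal derivatives, and `u_t = C(θ) θ_t`. -/

theorem HasStrictDerivAt.hasDerivAt_of_leftInverse {𝕜 : Type*} [NontriviallyNormedField 𝕜]
    [CompleteSpace 𝕜] {f g : 𝕜 → 𝕜} {f' a : 𝕜} (hf : HasStrictDerivAt f f' a) (hf' : f' ≠ 0)
    (hgf : Function.LeftInverse g f) : HasDerivAt g f'⁻¹ (f a) := by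
  have hmap : map f (𝓝 a) = 𝓝 (f a) := hf.map_nhds_eq hf'
  have hfg : ∀ᶠ y in 𝓝 (f a), f (g y) = y := by
    rw [← hmap, eventually_map]
    exact Eventually.of_forall fun x => by rw [hgf x]
  have hg : ContinuousAt g (f a) := by
    rw [ContinuousAt, hgf a, ← hmap, tendsto_map'_iff, hgf.comp_eq_id]
    exact tendsto_id
  exact HasDerivAt.of_local_left_inverse hg (by rw [hgf a]; exact hf.hasDerivAt) hf' hfg

theorem hasDerivAt_integral_comp_leftInverse_integral {C k g : ℝ → ℝ} (hC : Continuous C)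
    (hk : Continuous k) (a y : ℝ) (hCy : C y ≠ 0)
    (hg : Function.LeftInverse g fun s => ∫ ξ in a..s, C ξ) :
    HasDerivAt (fun s => ∫ ξ in a..g s, k ξ) (k y * (C y)⁻¹) (∫ ξ in a..y, C ξ) := by
  have hgy : HasDerivAt g (C y)⁻¹ (∫ ξ in a..y, C ξ) :=
    (hC.integral_hasStrictDerivAt a y).hasDerivAt_of_leftInverse hCy hg
  have hk' : HasDerivAt (fun s => ∫ ξ in a..s, k ξ) (k y) (g (∫ ξ in a..y, C ξ)) := by
    rw [hg y]
    exact (hk.integral_hasStrictDerivAt a y).hasDerivAt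
  exact hk'.comp _ hgy

theorem stmt_13_general (C k : ℝ → ℝ) (hC : Continuous C) (hk : Continuous k)
    (hCpos : ∀ θ : ℝ, 0 < C θ) (θunderline : ℝ)
    (Cinv : ℝ → ℝ)
    (hCinvL : ∀ θ : ℝ, Cinv (∫ ξ in θunderline..θ, C ξ) = θ)
    (θ : ℝ → ℝ → ℝ) (t₀ x₀ : ℝ)
    (hθt : DifferentiableAt ℝ (fun t => θ t x₀) t₀)
    (hθx : ∀ᶠ x in nhds x₀, DifferentiableAt ℝ (fun y => θ t₀ y) x)
    (hkθx : DifferentiableAt ℝ (fun x => k (θ t₀ x) * deriv (fun y => θ t₀ y) x) x₀)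
    (u : ℝ → ℝ → ℝ) (hu : ∀ t x : ℝ, u t x = ∫ ξ in θunderline..(θ t x), C ξ)
    (α : ℝ → ℝ) (hα : ∀ s : ℝ, α s = ∫ ξ in θunderline..(Cinv s), k ξ) :
    deriv (fun t => u t x₀) t₀ = C (θ t₀ x₀) * deriv (fun t => θ t x₀) t₀ ∧
    (∀ᶠ x in nhds x₀,
      deriv (fun y => u t₀ y) x = C (θ t₀ x) * deriv (fun y => θ t₀ y) x) ∧
    (∀ᶠ x in nhds x₀,
      deriv α (u t₀ x) * deriv (fun y => u t₀ y) x =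
        k (θ t₀ x) * deriv (fun y => θ t₀ y) x) ∧
    DifferentiableAt ℝ (fun x => deriv α (u t₀ x) * deriv (fun y => u t₀ y) x) x₀ ∧
    (C (θ t₀ x₀) * deriv (fun t => θ t x₀) t₀ =
        deriv (fun x => k (θ t₀ x) * deriv (fun y => θ t₀ y) x) x₀ ↔
      deriv (fun t => u t x₀) t₀ =
        deriv (fun x => deriv α (u t₀ x) * deriv (fun y => u t₀ y) x) x₀) := by
  have hChat (y : ℝ) : HasDerivAt (fun s => ∫ ξ in θunderline..s, C ξ) (C y) y :=
    (hC.integral_hasStrictDerivAt _ y).hasDerivAt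
  have hut : deriv (fun t => u t x₀) t₀ = C (θ t₀ x₀) * deriv (fun t => θ t x₀) t₀ := by
    simp only [hu]
    exact ((hChat _).comp t₀ hθt.hasDerivAt).deriv
  have hux : ∀ᶠ x in 𝓝 x₀,
      deriv (fun y => u t₀ y) x = C (θ t₀ x) * deriv (fun y => θ t₀ y) x := by
    filter_upwards [hθx] with x hx
    simp only [hu]
    exact ((hChat _).comp x hx.hasDerivAt).deriv
  have hflux : (fun x => deriv α (u t₀ x) * deriv (fun y => u t₀ y) x)
      =ᶠ[𝓝 x₀] fun x => k (θ t₀ x) * deriv (fun y => θ t₀ y) x := by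
    filter_upwards [hux] with x hx
    have hCx := (hCpos (θ t₀ x)).ne'
    have hαx : deriv α (u t₀ x) = k (θ t₀ x) * (C (θ t₀ x))⁻¹ := by
      rw [funext hα, hu]
      exact (hasDerivAt_integral_comp_leftInverse_integral hC hk _ _ hCx hCinvL).deriv
    rw [hαx, hx]
    field_simp
  refine ⟨hut, hux, hflux, hkθx.congr_of_eventuallyEq hflux, ?_⟩
  rw [hut, hflux.deriv_eq]

/-- Equivalence of the temperature formulation `C(θ)θ_t = (k(θ)θ_x)_x` and the enthalpy
formulation `u_t = (α'(u)u_x)_x` under the transformation `u = Ĉ(θ)`,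
`Ĉ(θ) = ∫_θ̲^θ C`, `α(u) = ∫_θ̲^{Ĉ⁻¹(u)} k`. -/
theorem stmt_13 (C k : ℝ → ℝ) (hC : Continuous C) (hk : Continuous k)
    (hCpos : ∀ θ : ℝ, 0 < C θ) (θunderline : ℝ)
    (Cinv : ℝ → ℝ)
    (hCinvL : ∀ θ : ℝ, Cinv (∫ ξ in θunderline..θ, C ξ) = θ)
    (hCinvR : ∀ u ∈ Set.range fun θ => ∫ ξ in θunderline..θ, C ξ,
      (∫ ξ in θunderline..(Cinv u), C ξ) = u)
    (θ : ℝ → ℝ → ℝ) (D : Set (ℝ × ℝ)) (hD : IsOpen D) (t₀ x₀ : ℝ) (hmem : (t₀, x₀) ∈ D)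
    (hθt : DifferentiableAt ℝ (fun t => θ t x₀) t₀)
    (hθx : ∀ᶠ x in nhds x₀, DifferentiableAt ℝ (fun y => θ t₀ y) x)
    (hkθx : DifferentiableAt ℝ (fun x => k (θ t₀ x) * deriv (fun y => θ t₀ y) x) x₀)
    (u : ℝ → ℝ → ℝ) (hu : ∀ t x : ℝ, u t x = ∫ ξ in θunderline..(θ t x), C ξ)
    (α : ℝ → ℝ) (hα : ∀ s : ℝ, α s = ∫ ξ in θunderline..(Cinv s), k ξ) :
    deriv (fun t => u t x₀) t₀ = C (θ t₀ x₀) * deriv (fun t => θ t x₀) t₀ ∧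
    (∀ᶠ x in nhds x₀,
      deriv (fun y => u t₀ y) x = C (θ t₀ x) * deriv (fun y => θ t₀ y) x) ∧
    (∀ᶠ x in nhds x₀,
      deriv α (u t₀ x) * deriv (fun y => u t₀ y) x =
        k (θ t₀ x) * deriv (fun y => θ t₀ y) x) ∧
    DifferentiableAt ℝ (fun x => deriv α (u t₀ x) * deriv (fun y => u t₀ y) x) x₀ ∧
    (C (θ t₀ x₀) * deriv (fun t => θ t x₀) t₀ =
        deriv (fun x => k (θ t₀ x) * deriv (fun y => θ t₀ y) x) x₀ ↔
      deriv (fun t => u t x₀) t₀ =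
        deriv (fun x => deriv α (u t₀ x) * deriv (fun y => u t₀ y) x) x₀) :=
  stmt_13_general C k hC hk hCpos θunderline Cinv hCinvL θ t₀ x₀ hθt hθx hkθx u hu α hα
end
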